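/- arXiv:1909.10668 — 8 statements merged into one kernel-verified Lean document; each statement's English description precedes it below -/
import Mathlib

section
/- There is an absolute constant C > 0 such that for all integers n ≥ 2 and k ≥ 1, there exist an integer s with s ≤ C·(1 + min{n, n·log(2k+1)/log n}) and query vectors x₁,…,x_s ∈ {−k,−k+1,…,k−1,k}^n ⊆ ℤ^n such that the map y ↦ (‖y−x₁‖₂, …, ‖y−x_s‖₂) is injective on {−k,−k+1,…,k−1,k}^n. (That is, s nonadaptive ℓ₂ distance queries suffice to determine any hidden vector y exactly.) -/
/-!
Querying the origin reveals `‖y‖²`, after which the distance to any further query `x` reveals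
`⟪x, y⟫`. So it suffices that the linear forms `⟪x_j, ·⟫` separate `{-k,…,k}^n`, i.e. that no
nonzero `z ∈ {-2k,…,2k}^n` is orthogonal to every `x_j`. When `n ≤ n log(2k+1) / log n` the `n`
unit vectors do this. Otherwise take `s ≍ n log k / log n` random `0/1` vectors: by the
Erdős–Littlewood–Offord inequality (Sperner's theorem) a random subset sum of a `z` with `m`
nonzero entries vanishes with probability at most `1/√(m+1)`, and a union bound over the at most
`C(n,m) (4k+1)^m` such `z`, for each `m`, shows that some choice of the queries works.
-/

open Finset Real

theorem Nat.centralBinom_sq_mul_le (t : ℕ) : t.centralBinom ^ 2 * (2 * t + 1) ≤ 16 ^ t := by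
  induction t with
  | zero => simp
  | succ t ih =>
    have hrec := Nat.succ_mul_centralBinom_succ t
    have hpoly : 4 * (2 * t + 1) * (2 * t + 3) ≤ 16 * (t + 1) ^ 2 := by nlinarith
    refine Nat.le_of_mul_le_mul_left ?_ (by positivity : 0 < (t + 1) ^ 2)
    calc (t + 1) ^ 2 * ((t + 1).centralBinom ^ 2 * (2 * (t + 1) + 1))
        = 4 * (2 * t + 1) * (2 * t + 3) * (t.centralBinom ^ 2 * (2 * t + 1)) := by
          rw [← mul_assoc, ← mul_pow, hrec]; ring
      _ ≤ 16 * (t + 1) ^ 2 * 16 ^ t := Nat.mul_le_mul hpoly ih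
      _ = (t + 1) ^ 2 * 16 ^ (t + 1) := by ring

theorem Nat.choose_half_sq_mul_le (m : ℕ) : m.choose (m / 2) ^ 2 * (m + 1) ≤ 4 ^ m := by
  obtain ⟨t, rfl | rfl⟩ := Nat.even_or_odd' m
  · have := Nat.centralBinom_sq_mul_le t
    rwa [Nat.mul_div_cancel_left t two_pos, ← Nat.centralBinom_eq_two_mul_choose, pow_mul]
  · have hsum : (t + 1).centralBinom = 2 * (2 * t + 1).choose t := by
      rw [Nat.centralBinom_eq_two_mul_choose, show 2 * (t + 1) = 2 * t + 1 + 1 by ring,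
        Nat.choose_succ_succ, Nat.choose_symm_half]
      ring
    have hbound := Nat.centralBinom_sq_mul_le (t + 1)
    rw [hsum] at hbound
    rw [show (2 * t + 1) / 2 = t by omega]
    have h16 : 16 ^ (t + 1) = 4 * 4 ^ (2 * t + 1) := by rw [pow_succ, pow_succ, pow_mul]; ring
    nlinarith

section LittlewoodOfford

variable {ι G : Type*} [Fintype ι]

theorem card_filter_sum_eq_le_of_pos {M : Type*} [AddCommMonoid M] [PartialOrder M]
    [IsOrderedCancelAddMonoid M] [DecidableEq M] {w : ι → M} (hw : ∀ i, 0 < w i) (t : M) :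
    #{A : Finset ι | ∑ i ∈ A, w i = t} ≤ (Fintype.card ι).choose (Fintype.card ι / 2) := by
  refine IsAntichain.sperner fun A hA B hB hne hAB ↦ ?_
  obtain ⟨i, hiB, hiA⟩ := exists_of_ssubset (lt_of_le_of_ne hAB hne)
  have hlt := sum_lt_sum_of_subset hAB hiB hiA (hw i) fun j _ _ ↦ (hw j).le
  simp only [coe_filter, mem_univ, true_and, Set.mem_ofPred_eq] at hA hB
  exact hlt.ne (hA.trans hB.symm)

variable [DecidableEq ι] [AddCommGroup G] [LinearOrder G] [IsOrderedAddMonoid G]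

theorem card_filter_sum_eq_le_of_ne_zero {z : ι → G} (hz : ∀ i, z i ≠ 0) (t : G) :
    #{A : Finset ι | ∑ i ∈ A, z i = t} ≤ (Fintype.card ι).choose (Fintype.card ι / 2) := by
  set N : Finset ι := {i | z i < 0}
  -- flipping the coordinates where `z` is negative makes all weights positive
  have hflip (A : Finset ι) : ∑ i ∈ A, z i = ∑ i ∈ symmDiff A N, |z i| + ∑ i ∈ N, z i := by
    rw [← Fintype.sum_ite_mem A, ← Fintype.sum_ite_mem (symmDiff A N), ← Fintype.sum_ite_mem N,
      ← sum_add_distrib]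
    refine sum_congr rfl fun i _ ↦ ?_
    rcases (hz i).lt_or_gt with hneg | hpos
    · by_cases hA : i ∈ A <;> simp [N, mem_symmDiff, hA, hneg, abs_of_neg]
    · by_cases hA : i ∈ A <;> simp [N, mem_symmDiff, hA, hpos, abs_of_pos, not_lt.2 hpos.le]
  calc #{A : Finset ι | ∑ i ∈ A, z i = t}
      ≤ #{B : Finset ι | ∑ i ∈ B, |z i| = t - ∑ i ∈ N, z i} := by
        refine card_le_card_of_injOn (symmDiff · N) (fun A hA ↦ ?_)
          (symmDiff_left_injective N).injOn
        simp only [coe_filter, mem_univ, true_and, Set.mem_ofPred_eq] at hA ⊢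
        rw [← hA, hflip, add_sub_cancel_right]
    _ ≤ _ := card_filter_sum_eq_le_of_pos (fun i ↦ abs_pos.2 (hz i)) _

theorem card_filter_sum_eq_le (z : ι → G) (t : G) :
    #{A : Finset ι | ∑ i ∈ A, z i = t} ≤
      (#{i | z i ≠ 0}).choose (#{i | z i ≠ 0} / 2) * 2 ^ (Fintype.card ι - #{i | z i ≠ 0}) := by
  set p : ι → Prop := (z · ≠ 0)
  have hcard : Fintype.card {i // p i} = #{i | z i ≠ 0} := Fintype.card_subtype p
  have hsum (A : Finset ι) : ∑ i ∈ A.subtype p, z i = ∑ i ∈ A, z i := by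
    rw [sum_subtype_eq_sum_filter, sum_filter_ne_zero]
  have hfiber (B : Finset {i // p i}) :
      #{A : Finset ι | A.subtype p = B} ≤ 2 ^ (Fintype.card ι - #{i | z i ≠ 0}) := by
    calc #{A : Finset ι | A.subtype p = B} ≤ #(univ : Finset (Finset {i // ¬ p i})) := by
          refine card_le_card_of_injOn (·.subtype (¬ p ·)) (fun _ _ ↦ mem_coe.2 (mem_univ _)) ?_
          intro A₁ hA₁ A₂ hA₂ h
          simp only [coe_filter, mem_univ, true_and, Set.mem_ofPred_eq] at hA₁ hA₂
          ext i
          by_cases hi : p i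
          · simpa [hi] using congrArg (⟨i, hi⟩ ∈ ·) (hA₁.trans hA₂.symm)
          · simpa [hi] using congrArg (⟨i, hi⟩ ∈ ·) h
      _ = 2 ^ (Fintype.card ι - #{i | z i ≠ 0}) := by
          rw [card_univ, Fintype.card_finset, Fintype.card_subtype_compl, hcard]
  have hmaps (A : Finset ι) (hA : A ∈ ({A | ∑ i ∈ A, z i = t} : Finset (Finset ι))) :
      A.subtype p ∈ ({B | ∑ i ∈ B, z i = t} : Finset (Finset {i // p i})) := by
    simp only [mem_filter, mem_univ, true_and] at hA ⊢
    rwa [hsum]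
  calc #{A : Finset ι | ∑ i ∈ A, z i = t}
      ≤ 2 ^ (Fintype.card ι - #{i | z i ≠ 0}) * #{B : Finset {i // p i} | ∑ i ∈ B, z i = t} :=
        card_le_mul_card_image_of_maps_to hmaps _ fun B _ ↦
          (card_le_card (filter_subset_filter _ (subset_univ _))).trans (hfiber B)
    _ ≤ _ := by
        rw [mul_comm, ← hcard]
        exact Nat.mul_le_mul_right _ (card_filter_sum_eq_le_of_ne_zero (fun i ↦ i.2) t)

theorem card_filter_sum_eq_sq_mul_le (z : ι → G) (t : G) :
    #{A : Finset ι | ∑ i ∈ A, z i = t} ^ 2 * (#{i | z i ≠ 0} + 1) ≤ 4 ^ Fintype.card ι := by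
  set m := #{i | z i ≠ 0}
  have hm : m ≤ Fintype.card ι := card_le_univ _
  calc #{A : Finset ι | ∑ i ∈ A, z i = t} ^ 2 * (m + 1)
      ≤ (m.choose (m / 2) * 2 ^ (Fintype.card ι - m)) ^ 2 * (m + 1) := by
        gcongr; exact card_filter_sum_eq_le z t
    _ = m.choose (m / 2) ^ 2 * (m + 1) * 4 ^ (Fintype.card ι - m) := by
        rw [mul_pow, ← pow_mul, mul_comm (Fintype.card ι - m), pow_mul]; norm_num; ring
    _ ≤ 4 ^ m * 4 ^ (Fintype.card ι - m) := by gcongr; exact Nat.choose_half_sq_mul_le m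
    _ = 4 ^ Fintype.card ι := by rw [← pow_add, Nat.add_sub_cancel' hm]

theorem mul_card_filter_sum_eq_pow_le (z : ι → G) (t : G) (s : ℕ) {D : ℕ}
    (hD : (2 * Fintype.card ι * D) ^ 2 ≤ (#{i | z i ≠ 0} + 1) ^ s) :
    2 * Fintype.card ι * D * #{A : Finset ι | ∑ i ∈ A, z i = t} ^ s ≤
      (2 ^ Fintype.card ι) ^ s := by
  refine (Nat.pow_le_pow_iff_left two_ne_zero).1 ?_
  calc (2 * Fintype.card ι * D * #{A : Finset ι | ∑ i ∈ A, z i = t} ^ s) ^ 2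
      ≤ (#{i | z i ≠ 0} + 1) ^ s * (#{A : Finset ι | ∑ i ∈ A, z i = t} ^ 2) ^ s := by
        rw [mul_pow, ← pow_mul, mul_comm s, pow_mul]
        exact Nat.mul_le_mul_right _ hD
    _ = (#{A : Finset ι | ∑ i ∈ A, z i = t} ^ 2 * (#{i | z i ≠ 0} + 1)) ^ s := by
        rw [← mul_pow, mul_comm]
    _ ≤ (4 ^ Fintype.card ι) ^ s := Nat.pow_le_pow_left (card_filter_sum_eq_sq_mul_le z t) s
    _ = ((2 ^ Fintype.card ι) ^ s) ^ 2 := by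
        rw [← pow_mul, ← pow_mul, ← pow_mul, show (4 : ℕ) = 2 ^ 2 by norm_num, ← pow_mul]
        ring_nf

theorem card_filter_card_support_eq_le {M : Type*} [Zero M] [DecidableEq M] (T : Finset M)
    (m : ℕ) :
    #{z ∈ Fintype.piFinset fun _ : ι ↦ T | #{i | z i ≠ 0} = m} ≤
      (Fintype.card ι).choose m * #T ^ m := by
  set F := {z ∈ Fintype.piFinset fun _ : ι ↦ T | #{i | z i ≠ 0} = m}
  have hmaps (z : ι → M) (hz : z ∈ F) :
      ({i | z i ≠ 0} : Finset ι) ∈ powersetCard m (univ : Finset ι) := by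
    simp_all [F]
  have hfiber (S : Finset ι) (hS : S ∈ powersetCard m (univ : Finset ι)) :
      #{z ∈ F | ({i | z i ≠ 0} : Finset ι) = S} ≤ #T ^ m := by
    calc _ ≤ #(Fintype.piFinset fun i ↦ if i ∈ S then T else {0}) := by
          refine card_le_card fun z hz ↦ Fintype.mem_piFinset.2 fun i ↦ ?_
          simp only [F, mem_filter, Fintype.mem_piFinset] at hz
          obtain ⟨⟨hzT, -⟩, rfl⟩ := hz
          by_cases hi : z i = 0 <;> simp [hi, hzT i]
      _ = #T ^ m := by
          simp only [Fintype.card_piFinset, apply_ite card, card_singleton, Fintype.prod_ite_mem,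
            prod_const, (mem_powersetCard.1 hS).2]
  rw [mul_comm, ← card_univ, ← card_powersetCard]
  exact card_le_mul_card_image_of_maps_to hmaps _ hfiber

theorem exists_forall_notMem_of_sum_card_lt {α β : Type*} [Fintype α] [DecidableEq α]
    {Z : Finset β} (B : β → Finset α) (h : ∑ z ∈ Z, #(B z) < Fintype.card α) :
    ∃ a, ∀ z ∈ Z, a ∉ B z := by
  by_contra! hcover
  have : univ ⊆ Z.biUnion B := fun a _ ↦ by simpa using hcover a
  exact (card_le_card this |>.trans card_biUnion_le).not_gt (by simpa using h)

theorem sum_card_filter_sum_eq_zero_pow_lt [Nonempty ι] (T : Finset G) (s : ℕ)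
    (hs : ∀ m ∈ Icc 1 (Fintype.card ι),
      (2 * Fintype.card ι * ((Fintype.card ι).choose m * #T ^ m)) ^ 2 ≤ (m + 1) ^ s) :
    ∑ z ∈ (Fintype.piFinset fun _ : ι ↦ T).erase 0, #{A : Finset ι | ∑ i ∈ A, z i = 0} ^ s <
      (2 ^ Fintype.card ι) ^ s := by
  set N := Fintype.card ι
  set Z := (Fintype.piFinset fun _ : ι ↦ T).erase 0
  set bad : (ι → G) → ℕ := fun z ↦ #{A : Finset ι | ∑ i ∈ A, z i = 0}
  have hN : 0 < N := Fintype.card_pos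
  have hsupp (z : ι → G) (hz : z ∈ Z) : #{i | z i ≠ 0} ∈ Icc 1 N := by
    have hz0 : z ≠ 0 := ne_of_mem_erase hz
    refine mem_Icc.2 ⟨card_pos.2 ?_, card_le_univ _⟩
    obtain ⟨i, hi⟩ := Function.ne_iff.1 hz0
    exact ⟨i, by simpa using hi⟩
  have hterm (z : ι → G) (hz : z ∈ Z) :
      2 * N * (N.choose #{i | z i ≠ 0} * #T ^ #{i | z i ≠ 0}) * bad z ^ s ≤ (2 ^ N) ^ s :=
    mul_card_filter_sum_eq_pow_le z 0 s (hs _ (hsupp z hz))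
  have hlevel (m : ℕ) (_ : m ∈ Icc 1 N) :
      2 * N * ∑ z ∈ Z with #{i | z i ≠ 0} = m, bad z ^ s ≤ (2 ^ N) ^ s := by
    set D := N.choose m * #T ^ m
    have hF : #{z ∈ Z | #{i | z i ≠ 0} = m} ≤ D :=
      (card_le_card (filter_subset_filter _ (erase_subset _ _))).trans
        (card_filter_card_support_eq_le T m)
    by_cases hne : (Z.filter fun z ↦ #{i | z i ≠ 0} = m).Nonempty
    swap
    · simp [not_nonempty_iff_eq_empty.1 hne]
    refine Nat.le_of_mul_le_mul_left ?_ (hne.card_pos.trans_le hF)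
    calc D * (2 * N * ∑ z ∈ Z with #{i | z i ≠ 0} = m, bad z ^ s)
        = ∑ z ∈ Z with #{i | z i ≠ 0} = m, 2 * N * D * bad z ^ s := by
          rw [mul_sum, mul_sum]; congr! 1; ring
      _ ≤ ∑ z ∈ Z with #{i | z i ≠ 0} = m, (2 ^ N) ^ s := sum_le_sum fun z hz ↦ by
          obtain ⟨hzZ, rfl⟩ := mem_filter.1 hz
          exact hterm z hzZ
      _ ≤ D * (2 ^ N) ^ s := by
          rw [sum_const, smul_eq_mul]; exact Nat.mul_le_mul_right _ hF
  refine lt_of_mul_lt_mul_left (a := 2 * N) ?_ (Nat.zero_le _)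
  calc 2 * N * ∑ z ∈ Z, bad z ^ s
      = ∑ m ∈ Icc 1 N, 2 * N * ∑ z ∈ Z with #{i | z i ≠ 0} = m, bad z ^ s := by
        rw [← sum_fiberwise_of_maps_to hsupp, mul_sum]
    _ ≤ ∑ _m ∈ Icc 1 N, (2 ^ N) ^ s := sum_le_sum hlevel
    _ < 2 * N * (2 ^ N) ^ s := by
        rw [sum_const, Nat.card_Icc, smul_eq_mul, add_tsub_cancel_right]
        exact Nat.mul_lt_mul_of_pos_right (by omega) (by positivity)

theorem exists_subsets_sum_ne_zero [Nonempty ι] (T : Finset G) (s : ℕ)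
    (hs : ∀ m ∈ Icc 1 (Fintype.card ι),
      (2 * Fintype.card ι * ((Fintype.card ι).choose m * #T ^ m)) ^ 2 ≤ (m + 1) ^ s) :
    ∃ X : Fin s → Finset ι,
      ∀ z ∈ Fintype.piFinset fun _ : ι ↦ T, z ≠ 0 → ∃ j, ∑ i ∈ X j, z i ≠ 0 := by
  obtain ⟨X, hX⟩ := exists_forall_notMem_of_sum_card_lt
    (Z := (Fintype.piFinset fun _ : ι ↦ T).erase 0)
    (fun z ↦ Fintype.piFinset fun _ : Fin s ↦ ({A | ∑ i ∈ A, z i = 0} : Finset (Finset ι)))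
    (by simpa [Fintype.card_piFinset, Fintype.card_finset] using
      sum_card_filter_sum_eq_zero_pow_lt T s hs)
  refine ⟨X, fun z hz hz0 ↦ ?_⟩
  simpa [Fintype.mem_piFinset] using hX z (mem_erase.2 ⟨hz0, hz⟩)

end LittlewoodOfford

theorem Real.log_sq_le_sixteen_mul_sqrt {x : ℝ} (hx : 1 ≤ x) : log x ^ 2 ≤ 16 * √x := by
  have h := log_le_rpow_div (by linarith : 0 ≤ x) (by norm_num : (0 : ℝ) < 1 / 4)
  calc log x ^ 2 ≤ (x ^ (1 / 4 : ℝ) / (1 / 4)) ^ 2 := by gcongr; exact log_nonneg hx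
    _ = 16 * (x ^ ((1 / 4 : ℝ) * (2 : ℕ))) := by
        rw [rpow_mul_natCast (by linarith)]; ring
    _ = 16 * √x := by rw [sqrt_eq_rpow]; norm_num

theorem Real.log_le_two_mul_sqrt {x : ℝ} (hx : 0 ≤ x) : log x ≤ 2 * √x := by
  have h := log_le_rpow_div hx (by norm_num : (0 : ℝ) < 1 / 2)
  rw [← sqrt_eq_rpow] at h
  linarith

theorem two_mul_log_le_of_le_sq {n m s : ℕ} {L : ℝ} (hn : 2 ≤ n) (hmn : m ≤ n) (hL : 1 ≤ L)
    (hs : 200 * n * L ≤ s * log n) (hsq : (n : ℝ) ≤ (m + 1) ^ 2) :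
    2 * (log (2 * n) + log (n.choose m) + m * L) ≤ s * log (m + 1) := by
  have hn' : (2 : ℝ) ≤ n := by exact_mod_cast hn
  have hlog_n : log n ≤ n := log_le_self (by linarith)
  have hlog_2n : log (2 * n) ≤ 2 * n := by
    rw [log_mul two_ne_zero (by linarith)]; linarith [log_two_lt_d9]
  have hlog_choose : log (n.choose m) ≤ n := by
    calc log (n.choose m) ≤ log (2 ^ n) := by
          gcongr
          · exact_mod_cast Nat.choose_pos hmn
          · exact_mod_cast Nat.choose_le_two_pow n m
      _ ≤ n := by rw [log_pow]; nlinarith [log_two_lt_d9]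
  have hlog_m : log n ≤ 2 * log (m + 1) := by
    calc log n ≤ log ((m + 1) ^ 2) := log_le_log (by linarith) hsq
      _ = 2 * log (m + 1) := by rw [log_pow]; norm_num
  have hmL : (m : ℝ) * L ≤ n * L := by gcongr
  nlinarith

theorem two_mul_log_le_of_sq_le {n m s : ℕ} {L : ℝ} (hn : 2 ≤ n) (hm : 1 ≤ m) (hL : 1 ≤ L)
    (hs : 200 * n * L ≤ s * log n) (hsq : ((m : ℝ) + 1) ^ 2 ≤ n) :
    2 * (log (2 * n) + log (n.choose m) + m * L) ≤ s * log (m + 1) := by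
  have hn' : (2 : ℝ) ≤ n := by exact_mod_cast hn
  have hm' : (1 : ℝ) ≤ m := by exact_mod_cast hm
  set ℓ := log n
  have hℓ : 0 < ℓ := log_pos (by linarith)
  have hmn : m ≤ n := by exact_mod_cast (show (m : ℝ) ≤ n by nlinarith)
  have hsqrt : (m : ℝ) + 1 ≤ √n := le_sqrt_of_sq_le hsq
  have hsqrt_sq : √n * √n = n := mul_self_sqrt (by linarith)
  have hℓ_sq : ℓ ^ 2 ≤ 16 * √n := log_sq_le_sixteen_mul_sqrt (by linarith)
  have hℓ_sqrt : ℓ ≤ 2 * √n := log_le_two_mul_sqrt (by linarith)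
  have hlog_2n : log (2 * n) ≤ 2 * ℓ := by
    rw [log_mul two_ne_zero (by linarith), two_mul]
    gcongr
    exact log_le_log two_pos hn'
  have hlog_choose : log (n.choose m) ≤ m * ℓ := by
    calc log (n.choose m) ≤ log ((n : ℝ) ^ m) := by
          gcongr
          · exact_mod_cast Nat.choose_pos hmn
          · exact_mod_cast Nat.choose_le_pow n m
      _ = m * ℓ := log_pow (n : ℝ) m
  have hlog_m : 0.69 ≤ log (m + 1) :=
    log_two_gt_d9.le.trans' (by norm_num) |>.trans (log_le_log two_pos (by linarith))
  -- after multiplying by `ℓ`, the left side is `O(n L)` because `ℓ² = O(√n)` and `m < √n`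
  refine le_of_mul_le_mul_left ?_ hℓ
  calc ℓ * (2 * (log (2 * n) + log (n.choose m) + m * L))
      ≤ 2 * ((m + 2) * ℓ ^ 2) + 2 * m * L * ℓ := by nlinarith
    _ ≤ 2 * (2 * √n * (16 * √n)) + 2 * √n * L * (2 * √n) := by gcongr <;> linarith
    _ ≤ 138 * n * L := by nlinarith
    _ ≤ ℓ * (s * log (m + 1)) := by
        nlinarith [mul_le_mul_of_nonneg_left hlog_m (by positivity : (0 : ℝ) ≤ s * ℓ)]

theorem sq_two_mul_mul_choose_mul_pow_le {n m s T : ℕ} (hn : 2 ≤ n) (hm : m ∈ Icc 1 n)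
    (hT : 3 ≤ T) (hs : 200 * n * log T ≤ s * log n) :
    (2 * n * (n.choose m * T ^ m)) ^ 2 ≤ (m + 1) ^ s := by
  obtain ⟨hm1, hmn⟩ := mem_Icc.1 hm
  have hT' : (3 : ℝ) ≤ T := by exact_mod_cast hT
  have hL : 1 ≤ log T := (le_log_iff_exp_le (by linarith)).2 (by linarith [exp_one_lt_d9])
  have hlog : 2 * (log (2 * n) + log (n.choose m) + m * log T) ≤ s * log (m + 1) := by
    rcases le_total (n : ℝ) ((m + 1) ^ 2) with hsq | hsq
    · exact two_mul_log_le_of_le_sq hn hmn hL hs hsq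
    · exact two_mul_log_le_of_sq_le hn hm1 hL hs hsq
  have hchoose : (0 : ℝ) < n.choose m := by exact_mod_cast Nat.choose_pos hmn
  have hn' : (0 : ℝ) < n := by exact_mod_cast (by omega : 0 < n)
  have hT0 : (0 : ℝ) < T := by linarith
  have hreal : ((2 * n * (n.choose m * T ^ m)) ^ 2 : ℝ) ≤ ((m : ℝ) + 1) ^ s := by
    rw [← log_le_log_iff (by positivity) (by positivity), log_pow, log_pow,
      log_mul (by positivity) (by positivity), log_mul (by positivity) (by positivity),
      log_mul (by positivity) (by positivity), log_pow]
    rw [log_mul two_ne_zero hn'.ne'] at hlog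
    push_cast
    linarith
  exact_mod_cast hreal

noncomputable def l2Answers {ι : Type*} [Fintype ι] {s : ℕ} (x : Fin s → ι → ℤ) (y : ι → ℤ) :
    Fin s → ℝ :=
  fun j ↦ √(∑ i, ((y i : ℝ) - x j i) ^ 2)

section Queries

variable {ι : Type*} [Fintype ι]

theorem sum_sub_sq_eq (v w : ι → ℤ) :
    ∑ i, (v i - w i) ^ 2 = v ⬝ᵥ v - 2 * (w ⬝ᵥ v) + w ⬝ᵥ w := by
  rw [dotProduct, dotProduct, dotProduct, mul_sum, ← sum_sub_distrib, ← sum_add_distrib]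
  exact sum_congr rfl fun i _ ↦ by ring

theorem injOn_l2Answers_cons_zero {s : ℕ} (X : Fin s → ι → ℤ) {Y : Set (ι → ℤ)}
    (hX : Set.InjOn (fun y j ↦ X j ⬝ᵥ y) Y) :
    Set.InjOn (l2Answers (Fin.cons 0 X : Fin (s + 1) → ι → ℤ)) Y := by
  intro y hy y' hy' h
  have hsq (j : Fin (s + 1)) : ∑ i, (y i - (Fin.cons 0 X : Fin (s + 1) → ι → ℤ) j i) ^ 2 =
      ∑ i, (y' i - (Fin.cons 0 X : Fin (s + 1) → ι → ℤ) j i) ^ 2 := by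
    have hj := congrFun h j
    simp only [l2Answers] at hj
    rw [sqrt_inj (by positivity) (by positivity)] at hj
    exact_mod_cast hj
  have hnorm : y ⬝ᵥ y = y' ⬝ᵥ y' := by
    simpa [dotProduct, sq] using hsq 0
  refine hX hy hy' (funext fun j ↦ ?_)
  have hj := hsq j.succ
  rw [sum_sub_sq_eq, sum_sub_sq_eq, hnorm, Fin.cons_succ] at hj
  linarith

theorem exists_l2_queries_of_injOn_dotProduct {s : ℕ} (k : ℕ) (X : Fin s → ι → ℤ)
    (hXk : ∀ j i, |X j i| ≤ k) (hX : Set.InjOn (fun y j ↦ X j ⬝ᵥ y) {y | ∀ i, |y i| ≤ k}) :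
    ∃ x : Fin (s + 1) → ι → ℤ, (∀ j i, |x j i| ≤ k) ∧
      Set.InjOn (l2Answers x) {y | ∀ i, |y i| ≤ k} := by
  refine ⟨Fin.cons 0 X, fun j i ↦ ?_, injOn_l2Answers_cons_zero X hX⟩
  cases j using Fin.cases with
  | zero => simp
  | succ j => simpa using hXk j i

variable [DecidableEq ι]

theorem exists_l2_queries_card_succ {k : ℕ} (hk : 1 ≤ k) :
    ∃ x : Fin (Fintype.card ι + 1) → ι → ℤ, (∀ j i, |x j i| ≤ k) ∧
      Set.InjOn (l2Answers x) {y | ∀ i, |y i| ≤ k} := by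
  let e := Fintype.equivFin ι
  refine exists_l2_queries_of_injOn_dotProduct k (fun j ↦ Pi.single (e.symm j) 1)
    (fun j i ↦ ?_) fun y _ y' _ h ↦ funext fun i ↦ ?_
  · rw [Pi.single_apply]
    split_ifs <;> simp [hk]
  · simpa using congrFun h (e i)

end Queries

theorem exists_l2_queries_ceil_log {n k : ℕ} (hn : 2 ≤ n) (hk : 1 ≤ k) :
    ∃ x : Fin (⌈200 * n * log (4 * k + 1) / log n⌉₊ + 1) → Fin n → ℤ,
      (∀ j i, |x j i| ≤ k) ∧ Set.InjOn (l2Answers x) {y | ∀ i, |y i| ≤ k} := by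
  set s := ⌈200 * n * log (4 * k + 1) / log n⌉₊
  have hℓ : 0 < log n := log_pos (by exact_mod_cast (by omega : 1 < n))
  have hs : 200 * n * log ((4 * k + 1 : ℕ) : ℝ) ≤ s * log n := by
    push_cast
    exact (div_le_iff₀ hℓ).1 (Nat.le_ceil _)
  have hcard : #(Icc (-(2 * k : ℤ)) (2 * k)) = 4 * k + 1 := by
    rw [Int.card_Icc]; omega
  have : Nonempty (Fin n) := ⟨⟨0, by omega⟩⟩
  obtain ⟨X, hX⟩ := exists_subsets_sum_ne_zero (Icc (-(2 * k : ℤ)) (2 * k)) s fun m hm ↦ by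
    rw [hcard, Fintype.card_fin]
    exact sq_two_mul_mul_choose_mul_pow_le hn (by simpa using hm) (by omega) hs
  refine exists_l2_queries_of_injOn_dotProduct k (fun j i ↦ if i ∈ X j then 1 else 0)
    (fun j i ↦ ?_) fun y hy y' hy' h ↦ ?_
  · split_ifs <;> simp [hk]
  · have hdiff : y - y' ∈ Fintype.piFinset fun _ ↦ Icc (-(2 * k : ℤ)) (2 * k) := by
      refine Fintype.mem_piFinset.2 fun i ↦ ?_
      rw [mem_Icc, ← abs_le, Pi.sub_apply]
      linarith [abs_sub (y i) (y' i), hy i, hy' i]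
    by_contra hne
    obtain ⟨j, hj⟩ := hX (y - y') hdiff (sub_ne_zero.2 hne)
    have hdot := congrFun h j
    simp only [dotProduct, ite_mul, one_mul, zero_mul, Fintype.sum_ite_mem] at hdot
    simp [sum_sub_distrib, hdot] at hj

/-- Nonadaptive ℓ₂-query Mastermind upper bound: there is an absolute constant `C > 0`
such that for all `n ≥ 2`, `k ≥ 1` there are `s ≤ C·(1 + min{n, n·log(2k+1)/log n})`
query vectors in `{-k,…,k}^n` whose ℓ₂-distance answer map is injective on `{-k,…,k}^n`. -/
theorem mastermind_l2_upper :
    ∃ C : ℝ, 0 < C ∧ ∀ n k : ℕ, 2 ≤ n → 1 ≤ k →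
      ∃ (s : ℕ) (x : Fin s → Fin n → ℤ),
        (s : ℝ) ≤ C * (1 + min (n : ℝ)
            ((n : ℝ) * Real.log (2 * (k : ℝ) + 1) / Real.log (n : ℝ))) ∧
        (∀ j i, |x j i| ≤ (k : ℤ)) ∧
        Set.InjOn
          (fun y : Fin n → ℤ => fun j : Fin s =>
            Real.sqrt (∑ i, ((y i : ℝ) - (x j i : ℝ)) ^ 2))
          {y : Fin n → ℤ | ∀ i, |y i| ≤ (k : ℤ)} := by
  refine ⟨400, by norm_num, fun n k hn hk ↦ ?_⟩
  have hk' : (1 : ℝ) ≤ k := by exact_mod_cast hk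
  have hℓ : 0 < log n := log_pos (by exact_mod_cast (by omega : 1 < n))
  rcases le_total (n : ℝ) (n * log (2 * k + 1) / log n) with hmin | hmin
  · obtain ⟨x, hx, hinj⟩ := exists_l2_queries_card_succ (ι := Fin n) hk
    refine ⟨_, x, ?_, hx, hinj⟩
    rw [min_eq_left hmin, Fintype.card_fin]
    push_cast
    linarith
  · obtain ⟨x, hx, hinj⟩ := exists_l2_queries_ceil_log hn hk
    refine ⟨_, x, ?_, hx, hinj⟩
    have hlog : log (4 * k + 1) ≤ 2 * log (2 * k + 1) := by
      calc log (4 * k + 1) ≤ log ((2 * k + 1) ^ 2) := log_le_log (by positivity) (by nlinarith)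
        _ = 2 * log (2 * k + 1) := by rw [log_pow]; norm_num
    have hceil := Nat.ceil_lt_add_one
      (div_nonneg (mul_nonneg (by positivity) (log_nonneg (by linarith))) hℓ.le :
        0 ≤ 200 * n * log (4 * k + 1) / log n)
    have hratio : 200 * n * log (4 * k + 1) / log n ≤ 400 * (n * log (2 * k + 1) / log n) := by
      rw [mul_div_assoc', div_le_div_iff_of_pos_right hℓ]
      nlinarith
    rw [min_eq_right hmin]
    push_cast
    linarith
end

section
/- For all integers n ≥ 1 and k ≥ 1, the map from {−k,−k+1,…,k−1,k}^n to ℝ^{2n} sending y to the tuple of 2n values (‖k·e_i − y‖_∞, ‖−k·e_i − y‖_∞) for i = 1,…,n (where e_i is the i-th standard basis vector of ℤ^n) is injective. Consequently 2n nonadaptive ℓ∞ distance queries suffice to determine any hidden vector y ∈ {−k,…,k}^n exactly. -/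
/-!
Clip every answer from below at `k`. Off coordinate `i` the query `±k·e_i` differs from `y` by
`|y_j| ≤ k`, so the clipped answer sees only coordinate `i`: it is `k + max(y_i, 0)` for `-k·e_i`
and `k + max(-y_i, 0)` for `k·e_i`. Their difference is `y_i`, which gives an explicit decoder.
-/

theorem Finset.sup_sup_eq_of_forall_ne_le {ι : Type*} {s : Finset ι} {f : ι → ℕ} {i : ι}
    {k : ℕ} (hi : i ∈ s) (h : ∀ j ∈ s, j ≠ i → f j ≤ k) : s.sup f ⊔ k = f i ⊔ k := by
  refine le_antisymm (sup_le (Finset.sup_le fun j hj => ?_) le_sup_right)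
    (sup_le_sup_right (Finset.le_sup hi) k)
  by_cases hji : j = i
  · exact hji ▸ le_sup_left
  · exact le_sup_of_le_right (h j hj hji)

theorem sup_natAbs_single_sub_sup {ι : Type*} [Fintype ι] [DecidableEq ι] {y : ι → ℤ} {k : ℕ}
    (hy : ∀ j, |y j| ≤ k) (i : ι) (c : ℤ) :
    (Finset.univ.sup fun j => ((if j = i then c else 0) - y j).natAbs) ⊔ k
      = (c - y i).natAbs ⊔ k := by
  rw [Finset.sup_sup_eq_of_forall_ne_le (Finset.mem_univ i) fun j _ hji => ?_, if_pos rfl]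
  rw [if_neg hji, zero_sub, Int.natAbs_neg]
  have := abs_le.mp (hy j)
  omega

theorem eq_natAbs_sup_sub_natAbs_sup {y : ℤ} {k : ℕ} (hy : |y| ≤ k) :
    y = (((-k - y).natAbs ⊔ k : ℕ) : ℤ) - (((k - y).natAbs ⊔ k : ℕ) : ℤ) := by
  have := abs_le.mp hy
  omega

theorem mastermind_linfty_upper_general (n k : ℕ) :
    Set.InjOn
      (fun y : Fin n → ℤ => fun q : Fin n × Bool =>
        Finset.univ.sup fun j : Fin n =>
          ((if j = q.1 then (if q.2 then (k : ℤ) else -(k : ℤ)) else 0) - y j).natAbs)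
      {y : Fin n → ℤ | ∀ i, |y i| ≤ (k : ℤ)} := by
  intro y hy y' hy' h
  have decode : ∀ z : Fin n → ℤ, (∀ j, |z j| ≤ k) → ∀ i, z i =
      (((Finset.univ.sup fun j => ((if j = i then -(k : ℤ) else 0) - z j).natAbs) ⊔ k : ℕ) : ℤ)
      - (((Finset.univ.sup fun j => ((if j = i then (k : ℤ) else 0) - z j).natAbs) ⊔ k : ℕ) : ℤ) :=
    fun z hz i => by
      rw [sup_natAbs_single_sub_sup hz, sup_natAbs_single_sub_sup hz]
      exact eq_natAbs_sup_sub_natAbs_sup (hz i)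
  funext i
  rw [decode y hy, decode y' hy']
  have hA := congrFun h (i, true)
  have hB := congrFun h (i, false)
  simp only [if_true, Bool.false_eq_true, if_false] at hA hB
  rw [hA, hB]

/-- ℓ∞-query Mastermind: the `2n` nonadaptive queries `k·e_i` and `-k·e_i` (for `i = 1,…,n`)
determine any hidden vector `y ∈ {-k,…,k}^n` exactly; i.e. the answer map
`y ↦ (‖k·e_i − y‖_∞, ‖−k·e_i − y‖_∞)_{i}` is injective on the box.
Here the ℓ∞ norm of an integer vector `v` is `sup_i |v_i|`, computed via `natAbs`. -/
theorem mastermind_linfty_upper (n k : ℕ) (hn : 1 ≤ n) (hk : 1 ≤ k) :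
    Set.InjOn
      (fun y : Fin n → ℤ => fun q : Fin n × Bool =>
        Finset.univ.sup fun j : Fin n =>
          ((if j = q.1 then (if q.2 then (k : ℤ) else -(k : ℤ)) else 0) - y j).natAbs)
      {y : Fin n → ℤ | ∀ i, |y i| ≤ (k : ℤ)} :=
  mastermind_linfty_upper_general n k
end

section
/- There is an absolute constant c > 0 such that the following holds for all integers n ≥ 1, k ≥ 2 and all real R with 1 ≤ R ≤ k. Consider any deterministic adaptive query strategy with s queries: for j = 1,…,s the j-th query q_j ∈ {−k,…,k}^n is an arbitrary function of the previous answers, where for a hidden vector y ∈ {−k,…,k}^n the answers are defined recursively by a_j(y) = ‖y − q_j(a₁(y),…,a_{j−1}(y))‖_∞, and the output y′ ∈ {−k,…,k}^n is an arbitrary function of (a₁(y),…,a_s(y)). If for every y ∈ {−k,−k+1,…,k−1,k}^n the output satisfies ‖y′ − y‖_∞ ≤ R, then s ≥ c · n·log(k/R)/log(2k+1). -/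
/-!
Place the hidden vector on the grid `{d v - k : v ∈ {0,…,m-1}}^n` with spacing
`d = ⌊2R⌋ + 1` and `m = ⌊2k/d⌋ + 1` points per coordinate. Two distinct grid points are more
than `2R` apart, so no output can be within `R` of both: the map from grid points to their
answer transcripts, which lie in `{0,…,2k}^s`, is injective. Hence `m^n ≤ (2k+1)^s`, and
`m ≥ (2k+1)/(2R+1)` gives `m² ≥ k/R`.
-/

open Finset Function Real

theorem dist_eq_sup_natAbs_sub {ι : Type*} [Fintype ι] (x y : ι → ℤ) :
    dist x y = ((univ.sup fun i => (x i - y i).natAbs : ℕ) : ℝ) := by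
  have h : ∀ i, nndist (x i) (y i) = ((x i - y i).natAbs : NNReal) := fun i => by
    ext; simp [Int.dist_eq]
  rw [dist_pi_def, ← NNReal.coe_natCast, Nat.cast_finsetSup]
  simp only [h]

theorem sup_natAbs_sub_le_of_abs_le {ι : Type*} [Fintype ι] {x y : ι → ℤ} {k : ℕ}
    (hx : ∀ i, |x i| ≤ k) (hy : ∀ i, |y i| ≤ k) :
    (univ.sup fun i => (x i - y i).natAbs) ≤ 2 * k :=
  Finset.sup_le fun i _ => by
    have := abs_le.mp (hx i); have := abs_le.mp (hy i); omega

theorem injective_of_dist_decode_le {α β γ : Type*} [PseudoMetricSpace γ] {P : α → γ}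
    {enc : α → β} (dec : β → γ) {R : ℝ} (hdec : ∀ x, dist (P x) (dec (enc x)) ≤ R)
    (hsep : Pairwise fun x y => 2 * R < dist (P x) (P y)) : Injective enc := by
  intro x y hxy
  by_contra hne
  have hy : dist (P y) (dec (enc x)) ≤ R := hxy ▸ hdec y
  linarith [hsep hne, hdec x, dist_triangle_right (P x) (P y) (dec (enc x))]

section Grid

variable {ι : Type*} {m : ℕ} (d k : ℕ)

def gridPoint (v : ι → Fin m) : ι → ℤ := fun i => d * (v i : ℤ) - k

theorem abs_gridPoint_le (hdm : d * (m - 1) ≤ 2 * k) (v : ι → Fin m) (i : ι) :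
    |gridPoint d k v i| ≤ k := by
  have hv : d * (v i : ℕ) ≤ 2 * k :=
    (Nat.mul_le_mul_left d (Nat.le_sub_one_of_lt (v i).isLt)).trans hdm
  have : (d : ℤ) * (v i : ℕ) ≤ 2 * k := by exact_mod_cast hv
  rw [abs_le, gridPoint]
  constructor <;> nlinarith [Int.natCast_nonneg (d * v i)]

theorem le_dist_gridPoint [Fintype ι] {v w : ι → Fin m} (hvw : v ≠ w) :
    (d : ℝ) ≤ dist (gridPoint d k v) (gridPoint d k w) := by
  obtain ⟨i, hi⟩ := Function.ne_iff.mp hvw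
  have hsub : ((v i : ℕ) : ℤ) - (w i : ℕ) ≠ 0 :=
    sub_ne_zero.mpr (by exact_mod_cast Fin.val_ne_of_ne hi)
  have hd : (d : ℤ) ≤ |gridPoint d k v i - gridPoint d k w i| :=
    calc (d : ℤ) = d * 1 := (mul_one _).symm
      _ ≤ d * |((v i : ℕ) : ℤ) - (w i : ℕ)| := by gcongr; exact Int.one_le_abs hsub
      _ = |d * (((v i : ℕ) : ℤ) - (w i : ℕ))| := by rw [abs_mul, Nat.abs_cast]
      _ = |gridPoint d k v i - gridPoint d k w i| := by simp only [gridPoint]; ring_nf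
  refine le_trans ?_ (dist_le_pi_dist _ _ i)
  rw [Int.dist_eq, ← Int.cast_sub, ← Int.cast_abs]
  exact_mod_cast hd

end Grid

theorem add_one_div_le_div_add_one {a d : ℕ} {r : ℝ} (hd : 0 < d) (hdr : (d : ℝ) ≤ r) :
    (a + 1 : ℝ) / r ≤ ((a / d + 1 : ℕ) : ℝ) := by
  have hcover : a + 1 ≤ (a / d + 1) * d := by
    have := Nat.lt_div_mul_add (a := a) hd; rw [add_mul, one_mul]; omega
  rw [div_le_iff₀ ((Nat.cast_pos.mpr hd).trans_le hdr)]
  calc (a + 1 : ℝ) ≤ ((a / d + 1) * d : ℕ) := by exact_mod_cast hcover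
    _ ≤ _ := by rw [Nat.cast_mul]; gcongr

-- `x ↦ (2x+1)²/x = 4x + 4 + 1/x` is increasing on `[1/2, ∞)`.
theorem div_le_sq_two_mul_add_one_div {R k : ℝ} (hR : 1 / 2 ≤ R) (hRk : R ≤ k) :
    k / R ≤ ((2 * k + 1) / (2 * R + 1)) ^ 2 := by
  have hR0 : 0 < R := by linarith
  rw [div_pow, div_le_div_iff₀ hR0 (by positivity)]
  nlinarith [mul_le_mul hR hRk hR0.le hR0.le]

theorem half_mul_log_div_log_le {n s : ℕ} {t m b : ℝ} (ht : 0 < t) (hm : 0 < m) (hb : 1 < b)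
    (htm : t ≤ m ^ 2) (hmb : m ^ n ≤ b ^ s) : 1 / 2 * n * log t / log b ≤ s := by
  have hlogt : log t ≤ 2 * log m :=
    calc log t ≤ log (m ^ 2) := log_le_log ht htm
      _ = 2 * log m := by rw [log_pow]; norm_num
  have hlogm : n * log m ≤ s * log b := by
    rw [← log_pow, ← log_pow]; exact log_le_log (by positivity) hmb
  rw [div_le_iff₀ (log_pos hb)]
  nlinarith [Nat.cast_nonneg (α := ℝ) n]

/-- Adaptive lower bound for approximate Mastermind with ℓ∞ queries. Queries are
chosen adaptively from `{-k,…,k}^n`; the answer to query `x` on hidden vector `y` is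
`‖y − x‖_∞ = maxᵢ |yᵢ − xᵢ|` (a natural number, computed via `natAbs` and `Finset.sup`).
If the output is always within ℓ∞ distance `R` of the hidden vector, then
`s ≥ c·n·log(k/R)/log(2k+1)`. -/
theorem mastermind_linfty_adaptive_lower :
    ∃ c : ℝ, 0 < c ∧
    ∀ (n k : ℕ) (R : ℝ), 1 ≤ n → 2 ≤ k → 1 ≤ R → R ≤ (k : ℝ) →
    ∀ (s : ℕ)
      (q : (j : Fin s) → (Fin (j : ℕ) → ℕ) → (Fin n → ℤ))
      (out : (Fin s → ℕ) → (Fin n → ℤ))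
      (a : (Fin n → ℤ) → Fin s → ℕ),
    (∀ j prev i, |q j prev i| ≤ (k : ℤ)) →
    (∀ ans i, |out ans i| ≤ (k : ℤ)) →
    (∀ y : Fin n → ℤ, (∀ i, |y i| ≤ (k : ℤ)) → ∀ j : Fin s,
      a y j = Finset.univ.sup fun i : Fin n =>
        (y i - (q j (fun m : Fin (j : ℕ) => a y ⟨(m : ℕ), m.isLt.trans j.isLt⟩)) i).natAbs) →
    (∀ y : Fin n → ℤ, (∀ i, |y i| ≤ (k : ℤ)) →
      ((Finset.univ.sup fun i : Fin n => (y i - (out (a y)) i).natAbs : ℕ) : ℝ) ≤ R) →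
    c * (n : ℝ) * Real.log ((k : ℝ) / R) / Real.log (2 * (k : ℝ) + 1) ≤ (s : ℝ) := by
  refine ⟨1 / 2, by norm_num, ?_⟩
  intro n k R _ _ hR1 hRk s q out a hq _ ha hrec
  set d := ⌊2 * R⌋₊ + 1
  set m := 2 * k / d + 1
  have hbox : ∀ (v : Fin n → Fin m) i, |gridPoint d k v i| ≤ k :=
    abs_gridPoint_le d k (by simpa [m] using Nat.mul_div_le (2 * k) d)
  have hans : ∀ v j, a (gridPoint d k v) j < 2 * k + 1 := fun v j => by
    rw [ha _ (hbox v) j]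
    exact Nat.lt_succ_of_le (sup_natAbs_sub_le_of_abs_le (hbox v) (hq j _))
  have hsep : 2 * R < d := by push_cast [d]; linarith [Nat.lt_floor_add_one (2 * R)]
  have hinj : Injective fun (v : Fin n → Fin m) (j : Fin s) =>
      (⟨a (gridPoint d k v) j, hans v j⟩ : Fin (2 * k + 1)) :=
    injective_of_dist_decode_le (P := gridPoint d k) (fun t => out fun j => t j)
      (fun v => by rw [dist_eq_sup_natAbs_sub]; exact hrec _ (hbox v))
      (fun v w hvw => hsep.trans_le (le_dist_gridPoint d k hvw))
  have hcard : (m : ℝ) ^ n ≤ (2 * k + 1 : ℝ) ^ s := by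
    have := Fintype.card_le_of_injective _ hinj
    simp only [Fintype.card_fun, Fintype.card_fin] at this
    exact_mod_cast this
  have hd : (d : ℝ) ≤ 2 * R + 1 := by
    push_cast [d]; linarith [Nat.floor_le (by positivity : 0 ≤ 2 * R)]
  have hm : (2 * k + 1 : ℝ) / (2 * R + 1) ≤ m := by
    exact_mod_cast add_one_div_le_div_add_one (a := 2 * k) (Nat.succ_pos _) hd
  have hkR : (k : ℝ) / R ≤ (m : ℝ) ^ 2 :=
    (div_le_sq_two_mul_add_one_div (by linarith) hRk).trans (by gcongr)
  exact half_mul_log_div_log_le (by positivity) (by positivity) (by linarith) hkR hcard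
end

section
/- Fix an integer p ≥ 1. There is a constant c_p > 0 depending only on p such that for all integers n ≥ 1, k ≥ 1 and every ε ∈ (0,1), the following holds. For any finite set Q ⊆ {−k,−k+1,…,k−1,k}^n of query vectors with |Q| ≤ (1/200)·exp(c_p·ε²·n), the number of vectors y ∈ {−k,−k+1,…,k−1,k}^n satisfying |‖x − y‖_p^p − μ_x| ≤ ε·μ_x simultaneously for every x ∈ Q, where μ_x denotes the average of ‖x − z‖_p^p over z ∈ {−k,…,k}^n, is at least (99/100)·(2k+1)^n. (Hence a codemaker answering every query x by the fixed value μ_x^{1/p}, independent of y, gives answers consistent with a 99/100 fraction of all hidden vectors, so no algorithm making fewer than exp(c_p ε² n)/200 (1±ε)-noisy ℓ_p queries can succeed with probability 2/3.) -/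
/-!
For a fixed query `x` and `y` uniform on the box `{-k,…,k}^n`, `‖x - y‖_p^p` is a sum of `n`
independent coordinates with values in `[0, (2k)^p]`, so by Hoeffding's inequality (proved here by
counting: exponential Markov, the product structure of the box and `cosh t ≤ exp (t² / 2)`) it
deviates from its mean `μ_x` by at least `ε μ_x` on at most a `2 exp (-ε² μ_x² / (2 n (2k)^(2p)))`
fraction of the box. Pairing `w` with `-w` and Jensen's inequality give `μ_x ≥ n (k/2)^p`, so this
fraction is at most `2 exp (-ε² n / (2 · 16^p))`, and a union bound over the queries finishes the
proof with `c_p = 1 / (2 · 16^p)`.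
-/

open Finset Real Fintype

theorem exp_mul_le_cosh_add_div_mul_sinh {t u B : ℝ} (hu : |u| ≤ B) :
    exp (t * u) ≤ cosh (t * B) + u / B * sinh (t * B) := by
  obtain ⟨hBu, huB⟩ := abs_le.1 hu
  rcases (neg_le_self_iff.1 (hBu.trans huB)).eq_or_lt with rfl | hB
  · simp [show u = 0 by linarith]
  -- `t * u` is the convex combination of `-(t * B)` and `t * B` with these weights
  have key := convexOn_exp.2 (Set.mem_univ (-(t * B))) (Set.mem_univ (t * B))
    (div_nonneg (by linarith) (by linarith) : 0 ≤ (B - u) / (2 * B))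
    (div_nonneg (by linarith) (by linarith) : 0 ≤ (B + u) / (2 * B)) (by field_simp; ring)
  simp only [smul_eq_mul] at key
  calc exp (t * u) = exp ((B - u) / (2 * B) * -(t * B) + (B + u) / (2 * B) * (t * B)) := by
        congr 1; field_simp; ring
    _ ≤ (B - u) / (2 * B) * exp (-(t * B)) + (B + u) / (2 * B) * exp (t * B) := key
    _ = cosh (t * B) + u / B * sinh (t * B) := by rw [cosh_eq, sinh_eq]; field_simp; ring

theorem sum_exp_mul_le_of_sum_eq_zero {α : Type*} {T : Finset α} {u : α → ℝ} {B : ℝ}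
    (hu : ∀ w ∈ T, |u w| ≤ B) (h0 : ∑ w ∈ T, u w = 0) (t : ℝ) :
    ∑ w ∈ T, exp (t * u w) ≤ #T * exp ((t * B) ^ 2 / 2) :=
  calc ∑ w ∈ T, exp (t * u w)
      ≤ ∑ w ∈ T, (cosh (t * B) + u w / B * sinh (t * B)) :=
        sum_le_sum fun w hw => exp_mul_le_cosh_add_div_mul_sinh (hu w hw)
    _ = #T * cosh (t * B) := by
        rw [sum_add_distrib, ← sum_mul, ← sum_div, h0]; simp
    _ ≤ #T * exp ((t * B) ^ 2 / 2) := by gcongr; exact cosh_le_exp_half_sq _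

theorem card_filter_le_le_exp_mul_sum_exp {β : Type*} (S : Finset β) (X : β → ℝ) (s : ℝ)
    {t : ℝ} (ht : 0 ≤ t) :
    (#{z ∈ S | s ≤ X z} : ℝ) ≤ exp (-(t * s)) * ∑ z ∈ S, exp (t * X z) := by
  rw [mul_sum, card_eq_sum_ones, Nat.cast_sum, Nat.cast_one]
  calc ∑ z ∈ S with s ≤ X z, (1 : ℝ)
      ≤ ∑ z ∈ S with s ≤ X z, exp (-(t * s)) * exp (t * X z) := by
        refine sum_le_sum fun z hz => ?_
        rw [← exp_add, one_le_exp_iff]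
        nlinarith [(mem_filter.1 hz).2]
    _ ≤ ∑ z ∈ S, exp (-(t * s)) * exp (t * X z) :=
        sum_le_sum_of_subset_of_nonneg (filter_subset _ _) fun _ _ _ => by positivity

section Box

variable {ι α : Type*} [Fintype ι] [DecidableEq ι] {T : Finset α}

theorem sum_piFinset_exp_mul_sum (u : ι → α → ℝ) (t : ℝ) :
    ∑ z ∈ piFinset fun _ : ι => T, exp (t * ∑ i, u i (z i)) =
      ∏ i, ∑ w ∈ T, exp (t * u i w) := by
  simp_rw [mul_sum, exp_sum]
  exact sum_prod_piFinset T fun i w => exp (t * u i w)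

theorem card_filter_le_sum_le {u : ι → α → ℝ} {B : ℝ}
    (hu : ∀ i, ∀ w ∈ T, |u i w| ≤ B) (h0 : ∀ i, ∑ w ∈ T, u i w = 0) {s : ℝ} (hs : 0 ≤ s) :
    (#{z ∈ piFinset fun _ : ι => T | s ≤ ∑ i, u i (z i)} : ℝ) ≤
      exp (-(s ^ 2 / (2 * card ι * B ^ 2))) * #T ^ card ι := by
  set t := s / (card ι * B ^ 2)
  have ht : 0 ≤ t := by positivity
  calc (#{z ∈ piFinset fun _ : ι => T | s ≤ ∑ i, u i (z i)} : ℝ)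
      ≤ exp (-(t * s)) * ∏ i, ∑ w ∈ T, exp (t * u i w) := by
        rw [← sum_piFinset_exp_mul_sum]
        exact card_filter_le_le_exp_mul_sum_exp _ _ s ht
    _ ≤ exp (-(t * s)) * ∏ _i : ι, (#T * exp ((t * B) ^ 2 / 2)) := by
        gcongr with i
        exact sum_exp_mul_le_of_sum_eq_zero (hu i) (h0 i) t
    _ = exp (-(t * s) + card ι * ((t * B) ^ 2 / 2)) * #T ^ card ι := by
        rw [prod_const, card_univ, mul_pow, ← exp_nat_mul, exp_add]; ring
    _ = exp (-(s ^ 2 / (2 * card ι * B ^ 2))) * #T ^ card ι := by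
        congr 2
        rcases eq_or_ne ((card ι : ℝ) * B ^ 2) 0 with h | h
        · simp [t, h, mul_assoc]
        · simp only [t]; field_simp; ring

theorem card_filter_le_abs_sum_le {u : ι → α → ℝ} {B : ℝ}
    (hu : ∀ i, ∀ w ∈ T, |u i w| ≤ B) (h0 : ∀ i, ∑ w ∈ T, u i w = 0) {s : ℝ} (hs : 0 ≤ s) :
    (#{z ∈ piFinset fun _ : ι => T | s ≤ |∑ i, u i (z i)|} : ℝ) ≤
      2 * exp (-(s ^ 2 / (2 * card ι * B ^ 2))) * #T ^ card ι := by
  classical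
  have hpos := card_filter_le_sum_le hu h0 hs
  have hneg := card_filter_le_sum_le (u := -u) (by simpa using hu) (by simpa using h0) hs
  set A := {z ∈ piFinset fun _ : ι => T | s ≤ ∑ i, u i (z i)}
  set A' := {z ∈ piFinset fun _ : ι => T | s ≤ ∑ i, (-u) i (z i)}
  have hsub : {z ∈ piFinset fun _ : ι => T | s ≤ |∑ i, u i (z i)|} ⊆ A ∪ A' := fun z => by
    simp only [A, A', mem_union, mem_filter, Pi.neg_apply, sum_neg_distrib, le_abs]
    tauto
  calc _ ≤ (#(A ∪ A') : ℝ) := by exact_mod_cast card_le_card hsub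
    _ ≤ #A + #A' := by exact_mod_cast card_union_le A A'
    _ ≤ _ := by linarith

theorem sum_piFinset_sum_div_card_pow (g : ι → α → ℝ) :
    (∑ z ∈ piFinset fun _ : ι => T, ∑ i, g i (z i)) / #T ^ card ι =
      ∑ i, (∑ w ∈ T, g i w) / #T := by
  classical
  rw [sum_comm, sum_div]
  refine sum_congr rfl fun i _ => ?_
  have hι : card ι = card ι - 1 + 1 := (Nat.succ_pred_eq_of_pos (card_pos_iff.2 ⟨i⟩)).symm
  rw [sum_piFinset_apply, nsmul_eq_mul, Nat.cast_pow, hι, pow_succ, Nat.add_sub_cancel]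
  rcases eq_or_ne (#T : ℝ) 0 with h | h
  · simp [h]
  · rw [mul_div_mul_left _ _ (pow_ne_zero _ h)]

theorem card_filter_le_abs_sub_sum_mean_le {f : ι → α → ℝ} {B : ℝ}
    (hf : ∀ i, ∀ w ∈ T, f i w ∈ Set.Icc 0 B) {s : ℝ} (hs : 0 ≤ s) :
    (#{z ∈ piFinset fun _ : ι => T |
        s ≤ |∑ i, f i (z i) - ∑ i, (∑ w ∈ T, f i w) / #T|} : ℝ) ≤
      2 * exp (-(s ^ 2 / (2 * card ι * B ^ 2))) * #T ^ card ι := by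
  have hu : ∀ i, ∀ w ∈ T, |f i w - (∑ w ∈ T, f i w) / #T| ≤ B := fun i w hw => by
    refine abs_sub_le_of_nonneg_of_le (hf i w hw).1 (hf i w hw).2
      (div_nonneg (sum_nonneg fun v hv => (hf i v hv).1) (Nat.cast_nonneg _)) ?_
    rw [div_le_iff₀ (by exact_mod_cast card_pos.2 ⟨w, hw⟩), mul_comm, ← nsmul_eq_mul]
    exact sum_le_card_nsmul T _ B fun v hv => (hf i v hv).2
  have h0 : ∀ i, ∑ w ∈ T, (f i w - (∑ w ∈ T, f i w) / #T) = 0 := fun i => by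
    rcases T.eq_empty_or_nonempty with rfl | hT
    · simp
    rw [sum_sub_distrib, sum_const, nsmul_eq_mul, mul_div_cancel₀ _ (by simp [hT.ne_empty]),
      sub_self]
  simpa only [sum_sub_distrib] using card_filter_le_abs_sum_le hu h0 hs

end Box

theorem card_sub_card_mul_le_card_filter_forall {β γ : Type*} (S : Finset β) (Q : Finset γ)
    (P : γ → β → Prop) [∀ x, DecidablePred (P x)] {δ : ℝ}
    (h : ∀ x ∈ Q, (#{y ∈ S | ¬P x y} : ℝ) ≤ δ) :
    (#S : ℝ) - #Q * δ ≤ #{y ∈ S | ∀ x ∈ Q, P x y} := by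
  classical
  have hsplit : (#S : ℝ) = #{y ∈ S | ∀ x ∈ Q, P x y} + #{y ∈ S | ¬∀ x ∈ Q, P x y} := by
    exact_mod_cast (card_filter_add_card_filter_not (s := S) fun y => ∀ x ∈ Q, P x y).symm
  have hbad : (#{y ∈ S | ¬∀ x ∈ Q, P x y} : ℝ) ≤ #Q * δ :=
    calc (#{y ∈ S | ¬∀ x ∈ Q, P x y} : ℝ)
        ≤ #(Q.biUnion fun x => {y ∈ S | ¬P x y}) := by
          refine Nat.cast_le.2 (card_le_card fun y hy => ?_)
          simp only [mem_filter, mem_biUnion, not_forall] at hy ⊢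
          tauto
      _ ≤ ∑ x ∈ Q, (#{y ∈ S | ¬P x y} : ℝ) := by exact_mod_cast card_biUnion_le
      _ ≤ #Q • δ := sum_le_card_nsmul Q _ δ h
      _ = #Q * δ := nsmul_eq_mul _ _
  linarith

theorem sum_abs_le_sum_abs_sub {α : Type*} [AddCommGroup α] [LinearOrder α]
    [IsOrderedAddMonoid α] {T : Finset α} (hT : ∀ w ∈ T, -w ∈ T) (x : α) :
    ∑ w ∈ T, |w| ≤ ∑ w ∈ T, |x - w| := by
  have hflip : ∑ w ∈ T, |x + w| = ∑ w ∈ T, |x - w| :=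
    sum_nbij' Neg.neg Neg.neg hT hT (fun _ _ => neg_neg _) (fun _ _ => neg_neg _)
      fun w _ => by rw [sub_neg_eq_add]
  refine le_of_nsmul_le_nsmul_right two_ne_zero ?_
  calc 2 • ∑ w ∈ T, |w| = ∑ w ∈ T, |(x + w) - (x - w)| := by
        rw [smul_sum]
        exact sum_congr rfl fun w _ => by rw [← abs_nsmul]; congr 1; abel
    _ ≤ ∑ w ∈ T, (|x + w| + |x - w|) := sum_le_sum fun w _ => abs_sub _ _
    _ = 2 • ∑ w ∈ T, |x - w| := by rw [sum_add_distrib, hflip, two_nsmul]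

theorem card_Icc_neg_self (k : ℕ) : #(Icc (-(k : ℤ)) k) = 2 * k + 1 := by
  rw [Int.card_Icc]; omega

theorem sum_abs_Icc_neg_self (k : ℕ) : ∑ w ∈ Icc (-(k : ℤ)) k, |w| = k * (k + 1) := by
  induction k with
  | zero => simp
  | succ k ih =>
    have hIcc : Icc (-((k + 1 : ℕ) : ℤ)) (k + 1 : ℕ) =
        insert (-(k + 1 : ℤ)) (insert (k + 1 : ℤ) (Icc (-(k : ℤ)) k)) := by
      ext w; simp only [mem_insert, mem_Icc]; push_cast; omega
    rw [hIcc, sum_insert (by simp; omega), sum_insert (by simp), ih, abs_neg,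
      abs_of_pos (by positivity)]
    push_cast; ring

theorem half_pow_le_sum_abs_sub_pow_div (p k : ℕ) (x : ℤ) :
    ((k : ℝ) / 2) ^ p ≤ (∑ w ∈ Icc (-(k : ℤ)) k, |(x : ℝ) - w| ^ p) / (2 * k + 1) := by
  set T := Icc (-(k : ℤ)) k
  have hT : (#T : ℝ) = 2 * k + 1 := by rw [card_Icc_neg_self]; push_cast; ring
  have hsum : (k : ℝ) * (k + 1) ≤ ∑ w ∈ T, |(x : ℝ) - w| := by
    have h := sum_abs_le_sum_abs_sub (T := T)
      (fun w hw => by simp only [T, mem_Icc] at hw ⊢; omega) x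
    rw [sum_abs_Icc_neg_self] at h
    exact_mod_cast h
  have hmean : (k : ℝ) / 2 ≤ ∑ w ∈ T, 1 / (2 * k + 1) * |(x : ℝ) - w| := by
    rw [← mul_sum, one_div_mul_eq_div, le_div_iff₀ (by positivity)]
    nlinarith
  calc ((k : ℝ) / 2) ^ p ≤ (∑ w ∈ T, 1 / (2 * k + 1) * |(x : ℝ) - w|) ^ p := by gcongr
    _ ≤ ∑ w ∈ T, 1 / (2 * k + 1) * |(x : ℝ) - w| ^ p :=
        Real.pow_arith_mean_le_arith_mean_pow T _ _ (fun _ _ => by positivity)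
          (by rw [sum_const, nsmul_eq_mul, hT]; field_simp) (fun _ _ => abs_nonneg _) p
    _ = _ := by rw [← mul_sum, one_div_mul_eq_div]

noncomputable def intBox (n k : ℕ) : Finset (Fin n → ℤ) :=
  piFinset fun _ => Icc (-(k : ℤ)) k

noncomputable def lpPowDist {n : ℕ} (p : ℕ) (x y : Fin n → ℤ) : ℝ :=
  ∑ i, |(x i : ℝ) - y i| ^ p

noncomputable def boxMean {n : ℕ} (p k : ℕ) (x : Fin n → ℤ) : ℝ :=
  (∑ z ∈ intBox n k, lpPowDist p x z) / (2 * (k : ℝ) + 1) ^ n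

section Lp

variable {n p k : ℕ}

theorem mem_intBox {y : Fin n → ℤ} : y ∈ intBox n k ↔ ∀ i, |y i| ≤ k := by
  simp only [intBox, mem_piFinset, mem_Icc, abs_le]

theorem card_intBox : (#(intBox n k) : ℝ) = (2 * k + 1) ^ n := by
  rw [intBox, card_piFinset_const, card_Icc_neg_self]; push_cast; ring

theorem boxMean_eq_sum (x : Fin n → ℤ) :
    boxMean p k x = ∑ i, (∑ w ∈ Icc (-(k : ℤ)) k, |(x i : ℝ) - w| ^ p) / (2 * k + 1) := by
  have h := sum_piFinset_sum_div_card_pow (T := Icc (-(k : ℤ)) k)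
    fun i w => |(x i : ℝ) - w| ^ p
  rw [card_Icc_neg_self, Fintype.card_fin] at h
  push_cast at h
  exact h

theorem mul_half_pow_le_boxMean (x : Fin n → ℤ) :
    n * ((k : ℝ) / 2) ^ p ≤ boxMean p k x := by
  rw [boxMean_eq_sum]
  simpa using sum_le_sum fun i (_ : i ∈ univ) => half_pow_le_sum_abs_sub_pow_div p k (x i)

theorem card_filter_lt_abs_sub_boxMean_le (hk : 1 ≤ k) {x : Fin n → ℤ} (hx : x ∈ intBox n k)
    {ε : ℝ} (hε : 0 ≤ ε) :
    (#{y ∈ intBox n k | ε * boxMean p k x < |lpPowDist p x y - boxMean p k x|} : ℝ) ≤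
      2 * exp (-(ε ^ 2 * n / (2 * 16 ^ p))) * (2 * k + 1) ^ n := by
  set M := boxMean p k x
  have hf : ∀ i, ∀ w ∈ Icc (-(k : ℤ)) k,
      |(x i : ℝ) - w| ^ p ∈ Set.Icc 0 ((2 * k : ℝ) ^ p) := by
    intro i w hw
    have hxi := abs_le.1 (mem_intBox.1 hx i)
    have hdist : |x i - w| ≤ 2 * k := abs_le.2 ⟨by linarith [(mem_Icc.1 hw).2],
      by linarith [(mem_Icc.1 hw).1]⟩
    exact ⟨by positivity, pow_le_pow_left₀ (abs_nonneg _) (by exact_mod_cast hdist) p⟩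
  have hM := mul_half_pow_le_boxMean (p := p) (k := k) x
  have hM0 : 0 ≤ M := (by positivity : (0 : ℝ) ≤ n * ((k : ℝ) / 2) ^ p).trans hM
  have hdev := card_filter_le_abs_sub_sum_mean_le hf (s := ε * M) (mul_nonneg hε hM0)
  rw [card_Icc_neg_self, Fintype.card_fin] at hdev
  push_cast at hdev
  rw [← boxMean_eq_sum] at hdev
  have hexp : ε ^ 2 * n / (2 * 16 ^ p) ≤ (ε * M) ^ 2 / (2 * n * ((2 * k) ^ p) ^ 2) := by
    rcases n.eq_zero_or_pos with rfl | hn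
    · simp
    have hk' : (0 : ℝ) < k := by exact_mod_cast hk
    have h4 : (2 * k : ℝ) ^ p = 4 ^ p * (k / 2) ^ p := by rw [← mul_pow]; ring_nf
    have h16 : (16 : ℝ) ^ p = (4 ^ p) ^ 2 := by rw [← pow_mul, mul_comm, pow_mul]; norm_num
    calc ε ^ 2 * n / (2 * 16 ^ p)
        = (ε * (n * ((k : ℝ) / 2) ^ p)) ^ 2 / (2 * n * ((2 * k) ^ p) ^ 2) := by
          rw [h4, h16]; field_simp
      _ ≤ _ := by gcongr
  calc (#{y ∈ intBox n k | ε * M < |lpPowDist p x y - M|} : ℝ)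
      ≤ #{y ∈ intBox n k | ε * M ≤ |lpPowDist p x y - M|} := by
        exact_mod_cast card_le_card (monotone_filter_right _ fun _ _ => le_of_lt)
    _ ≤ 2 * exp (-((ε * M) ^ 2 / (2 * n * ((2 * k) ^ p) ^ 2))) * (2 * k + 1) ^ n := hdev
    _ ≤ _ := by gcongr

end Lp

theorem mastermind_noisy_counting_general (p : ℕ) :
    ∃ c : ℝ, 0 < c ∧
    ∀ (n k : ℕ), 1 ≤ n → 1 ≤ k →
    ∀ ε : ℝ, 0 < ε → ε < 1 →
    ∀ Q : Finset (Fin n → ℤ), (∀ x ∈ Q, ∀ i, |x i| ≤ (k : ℤ)) →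
    (Q.card : ℝ) ≤ (1 / 200) * Real.exp (c * ε ^ 2 * (n : ℝ)) →
    ∀ μ : (Fin n → ℤ) → ℝ,
      (∀ x : Fin n → ℤ,
        μ x = (∑ z ∈ Fintype.piFinset fun _ : Fin n => Finset.Icc (-(k : ℤ)) (k : ℤ),
            ∑ i, |(x i : ℝ) - (z i : ℝ)| ^ p) / (2 * (k : ℝ) + 1) ^ n) →
      (99 / 100 : ℝ) * (2 * (k : ℝ) + 1) ^ n ≤
        (Set.ncard {y : Fin n → ℤ | (∀ i, |y i| ≤ (k : ℤ)) ∧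
          ∀ x ∈ Q, |(∑ i, |(x i : ℝ) - (y i : ℝ)| ^ p) - μ x| ≤ ε * μ x} : ℝ) := by
  refine ⟨1 / (2 * 16 ^ p), by positivity, fun n k _ hk ε hε _ Q hQ hQcard μ hμ => ?_⟩
  obtain rfl : μ = boxMean p k := funext hμ
  set a := ε ^ 2 * n / (2 * 16 ^ p)
  rw [show 1 / (2 * 16 ^ p) * ε ^ 2 * n = a by ring] at hQcard
  have hbad : ∀ x ∈ Q, (#{y ∈ intBox n k | ¬|lpPowDist p x y - boxMean p k x| ≤
      ε * boxMean p k x} : ℝ) ≤ 2 * exp (-a) * (2 * k + 1) ^ n := fun x hx => by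
    simpa only [not_le] using
      card_filter_lt_abs_sub_boxMean_le hk (mem_intBox.2 (hQ x hx)) hε.le
  calc (99 / 100 : ℝ) * (2 * k + 1) ^ n
      = (2 * k + 1) ^ n - 1 / 200 * exp a * (2 * exp (-a) * (2 * k + 1) ^ n) := by
        rw [exp_neg]; field_simp; ring
    _ ≤ #(intBox n k) - #Q * (2 * exp (-a) * (2 * k + 1) ^ n) := by
        rw [card_intBox]; gcongr
    _ ≤ #{y ∈ intBox n k | ∀ x ∈ Q, |lpPowDist p x y - boxMean p k x| ≤ ε * boxMean p k x} :=
        card_sub_card_mul_le_card_filter_forall _ _ _ hbad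
    _ = _ := by
        rw [← Set.ncard_coe_finset, coe_filter]
        simp only [mem_intBox, lpPowDist]

/-- Counting step for the noisy ℓ_p Mastermind lower bound (integer `p ≥ 1`):
for any set `Q` of at most `(1/200)·exp(c_p·ε²·n)` queries from `{-k,…,k}^n`, at least
a `99/100` fraction of all `(2k+1)^n` hidden vectors `y` satisfy
`|‖x−y‖_p^p − μ_x| ≤ ε·μ_x` simultaneously for every `x ∈ Q`, where `μ_x` is the
average of `‖x−z‖_p^p` over the box. -/
theorem mastermind_noisy_counting (p : ℕ) (hp : 1 ≤ p) :
    ∃ c : ℝ, 0 < c ∧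
    ∀ (n k : ℕ), 1 ≤ n → 1 ≤ k →
    ∀ ε : ℝ, 0 < ε → ε < 1 →
    ∀ Q : Finset (Fin n → ℤ), (∀ x ∈ Q, ∀ i, |x i| ≤ (k : ℤ)) →
    (Q.card : ℝ) ≤ (1 / 200) * Real.exp (c * ε ^ 2 * (n : ℝ)) →
    ∀ μ : (Fin n → ℤ) → ℝ,
      (∀ x : Fin n → ℤ,
        μ x = (∑ z ∈ Fintype.piFinset fun _ : Fin n => Finset.Icc (-(k : ℤ)) (k : ℤ),
            ∑ i, |(x i : ℝ) - (z i : ℝ)| ^ p) / (2 * (k : ℝ) + 1) ^ n) →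
      (99 / 100 : ℝ) * (2 * (k : ℝ) + 1) ^ n ≤
        (Set.ncard {y : Fin n → ℤ | (∀ i, |y i| ≤ (k : ℤ)) ∧
          ∀ x ∈ Q, |(∑ i, |(x i : ℝ) - (y i : ℝ)| ^ p) - μ x| ≤ ε * μ x} : ℝ) :=
  mastermind_noisy_counting_general p
end

section
/- Let p ≥ 1 be a real number, n ≥ 1 an integer, z ∈ ℝ^n, and R ≥ 0 a real number. Then the number of lattice points y ∈ ℤ^n with ‖y − z‖_p ≤ R satisfies #{y ∈ ℤ^n : ‖y − z‖_p ≤ R} ≤ (R + n^{1/p})^n · 2^n · Γ(1 + 1/p)^n / Γ(1 + n/p), where Γ is the Gamma function. -/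
/-!
The unit cubes `y + [0,1)ⁿ` with `y ∈ ℤⁿ` are pairwise disjoint, have volume `1` and
`ℓ_p`-diameter at most `n^{1/p}`. By Minkowski's inequality the cubes of the lattice points in
the ball of radius `R` around `z` therefore lie in the ball of radius `R + n^{1/p}`, so their
number is at most the volume of that ball.
-/

open MeasureTheory Set Function

variable {ι : Type*}

def unitCube (y : ι → ℤ) : Set (ι → ℝ) :=
  univ.pi fun i => Ico (y i : ℝ) (y i + 1)

theorem pairwise_disjoint_unitCube :
    Pairwise (Disjoint on (unitCube : (ι → ℤ) → Set (ι → ℝ))) := by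
  intro a b hab
  refine disjoint_left.mpr fun x hxa hxb => hab <| funext fun i => ?_
  rw [← Int.floor_eq_iff.mpr (hxa i (mem_univ i)), Int.floor_eq_iff.mpr (hxb i (mem_univ i))]

variable [Fintype ι]

theorem measurableSet_unitCube (y : ι → ℤ) : MeasurableSet (unitCube y) :=
  MeasurableSet.univ_pi fun _ => measurableSet_Ico

theorem volume_unitCube (y : ι → ℤ) : volume (unitCube y) = 1 := by
  simp [unitCube, volume_pi_pi, Real.volume_Ico]

def lpClosedBall (p : ℝ) (z : ι → ℝ) (r : ℝ) : Set (ι → ℝ) :=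
  {x | (∑ i, |x i - z i| ^ p) ^ (1 / p) ≤ r}

theorem volume_lpClosedBall [Nonempty ι] {p : ℝ} (hp : 1 ≤ p) (z : ι → ℝ) (r : ℝ) :
    volume (lpClosedBall p z r) = .ofReal r ^ Fintype.card ι *
      .ofReal ((2 * Real.Gamma (1 / p + 1)) ^ Fintype.card ι /
        Real.Gamma (Fintype.card ι / p + 1)) := by
  have hshift : lpClosedBall p z r =
      (fun x => -z + x) ⁻¹' {x : ι → ℝ | (∑ i, |x i| ^ p) ^ (1 / p) ≤ r} := by
    ext x
    simp [lpClosedBall, neg_add_eq_sub]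
  rw [hshift, measure_preimage_add, volume_sum_rpow_le ι hp]

theorem lpClosedBall_subset_lpClosedBall_add {p : ℝ} (hp : 1 ≤ p) {y z : ι → ℝ}
    {r : ℝ} (hy : y ∈ lpClosedBall p z r) (s : ℝ) :
    lpClosedBall p y s ⊆ lpClosedBall p z (r + s) := by
  intro x hx
  have hminkowski := Real.Lp_add_le Finset.univ (fun i => y i - z i) (fun i => x i - y i) hp
  simp only [sub_add_sub_cancel'] at hminkowski
  exact hminkowski.trans (add_le_add hy hx)

theorem unitCube_subset_lpClosedBall {p : ℝ} (hp : 0 < p) (y : ι → ℤ) :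
    unitCube y ⊆ lpClosedBall p (fun i => (y i : ℝ)) ((Fintype.card ι : ℝ) ^ (1 / p)) := by
  intro x hx
  have hcoord (i : ι) : |x i - y i| ^ p ≤ 1 := by
    obtain ⟨hlo, hhi⟩ := hx i (mem_univ i)
    exact Real.rpow_le_one (abs_nonneg _) (abs_le.mpr ⟨by linarith, by linarith⟩) hp.le
  have hsum : ∑ i, |x i - y i| ^ p ≤ Fintype.card ι := by
    simpa using Finset.sum_le_sum fun i (_ : i ∈ Finset.univ) => hcoord i
  exact Real.rpow_le_rpow (by positivity) hsum (by positivity)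

theorem ncard_le_volume_of_unitCube_subset {S : Set (ι → ℤ)} {A : Set (ι → ℝ)}
    (hS : ∀ y ∈ S, unitCube y ⊆ A) : (S.ncard : ENNReal) ≤ volume A := by
  rcases S.finite_or_infinite with hfin | hinf
  · calc (S.ncard : ENNReal)
        = ∑ y ∈ hfin.toFinset, volume (unitCube y) := by
          simp [volume_unitCube, Set.ncard_eq_toFinset_card S hfin]
      _ = volume (⋃ y ∈ hfin.toFinset, unitCube y) :=
          (measure_biUnion_finset (pairwise_disjoint_unitCube.set_pairwise _)
            fun y _ => measurableSet_unitCube y).symm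
      _ ≤ volume A := measure_mono <| iUnion₂_subset fun y hy => hS y (by simpa using hy)
  · -- `ncard` of an infinite set is `0`
    simp [hinf.ncard]

/-- Lattice point count in an ℓ_p ball: for real `p ≥ 1`, `z ∈ ℝ^n` and `R ≥ 0`,
the number of `y ∈ ℤ^n` with `‖y − z‖_p ≤ R` is at most
`(R + n^{1/p})^n · 2^n · Γ(1 + 1/p)^n / Γ(1 + n/p)`. -/
theorem lattice_points_in_lp_ball (p : ℝ) (hp : 1 ≤ p) (n : ℕ) (hn : 1 ≤ n)
    (z : Fin n → ℝ) (R : ℝ) (hR : 0 ≤ R) :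
    (Set.ncard {y : Fin n → ℤ |
        (∑ i, |(y i : ℝ) - z i| ^ p) ^ (1 / p) ≤ R} : ℝ) ≤
      (R + (n : ℝ) ^ (1 / p)) ^ n * 2 ^ n * Real.Gamma (1 + 1 / p) ^ n /
        Real.Gamma (1 + (n : ℝ) / p) := by
  have : Nonempty (Fin n) := ⟨⟨0, hn⟩⟩
  have hcount :
      (Set.ncard {y : Fin n → ℤ | (fun i => (y i : ℝ)) ∈ lpClosedBall p z R} : ENNReal) ≤
        volume (lpClosedBall p z (R + Fintype.card (Fin n) ^ (1 / p))) :=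
    ncard_le_volume_of_unitCube_subset fun y hy =>
      (unitCube_subset_lpClosedBall (zero_lt_one.trans_le hp) y).trans
        (lpClosedBall_subset_lpClosedBall_add hp hy _)
  rw [volume_lpClosedBall hp, Fintype.card_fin, ← ENNReal.ofReal_pow (by positivity),
    ← ENNReal.ofReal_mul (by positivity), ← ENNReal.ofReal_natCast,
    ENNReal.ofReal_le_ofReal_iff (by positivity)] at hcount
  refine hcount.trans_eq ?_
  rw [add_comm 1 (1 / p), add_comm 1 ((n : ℝ) / p)]
  ring
end

section
/- Let k be a real number, let g₁,…,g_n : ℝ → ℝ be arbitrary functions, and for each i define hᵢ(t) = gᵢ(k − t), (hᵢ)_even(t) = (hᵢ(t) + hᵢ(−t))/2 and (hᵢ)_odd(t) = (hᵢ(t) − hᵢ(−t))/2. Then for every sign vector σ ∈ {−1, +1}^n and every y ∈ ℝ^n with |y_i| ≤ k for all i, one has Σᵢ gᵢ(|k·σᵢ − yᵢ|) = Σᵢ (hᵢ)_even(yᵢ) + Σᵢ σᵢ·(hᵢ)_odd(yᵢ). -/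
theorem abs_mul_sub_eq_sub_mul_of_sign {k σ t : ℝ} (hσ : σ = 1 ∨ σ = -1) (ht : |t| ≤ k) :
    |k * σ - t| = k - σ * t := by
  obtain ⟨hlo, hhi⟩ := abs_le.mp ht
  rcases hσ with rfl | rfl
  · rw [abs_of_nonneg] <;> linarith
  · rw [abs_of_nonpos] <;> linarith

theorem apply_sign_mul_eq_even_add_odd (h : ℝ → ℝ) {σ : ℝ} (hσ : σ = 1 ∨ σ = -1) (t : ℝ) :
    h (σ * t) = (h t + h (-t)) / 2 + σ * ((h t - h (-t)) / 2) := by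
  rcases hσ with rfl | rfl
  · rw [one_mul]; ring
  · rw [neg_one_mul]; ring

/-- The key even/odd-part identity: for `hᵢ(t) = gᵢ(k − t)` with even part
`(hᵢ)_even(t) = (gᵢ(k−t) + gᵢ(k+t))/2` and odd part `(hᵢ)_odd(t) = (gᵢ(k−t) − gᵢ(k+t))/2`,
any sign vector `σ ∈ {±1}^n` and any `y` with `|yᵢ| ≤ k` satisfy
`Σᵢ gᵢ(|k·σᵢ − yᵢ|) = Σᵢ (hᵢ)_even(yᵢ) + Σᵢ σᵢ·(hᵢ)_odd(yᵢ)`. -/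
theorem separable_sign_query_identity (n : ℕ) (k : ℝ) (g : Fin n → ℝ → ℝ)
    (σ : Fin n → ℝ) (hσ : ∀ i, σ i = 1 ∨ σ i = -1)
    (y : Fin n → ℝ) (hy : ∀ i, |y i| ≤ k) :
    ∑ i, g i |k * σ i - y i| =
      (∑ i, (g i (k - y i) + g i (k + y i)) / 2) +
        ∑ i, σ i * ((g i (k - y i) - g i (k + y i)) / 2) := by
  rw [← Finset.sum_add_distrib]
  refine Finset.sum_congr rfl fun i _ => ?_
  rw [abs_mul_sub_eq_sub_mul_of_sign (hσ i) (hy i)]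
  simpa only [sub_neg_eq_add] using
    apply_sign_mul_eq_even_add_odd (fun t => g i (k - t)) (hσ i) (y i)
end

section
/- Let k > 0 be a real number and define h(x) = √(1 + (k−x)²/2) − √(1 + (k+x)²/2) for x ∈ [−k, k]. Then h is strictly decreasing on [−k, k], and for all real x₂ < x₁ in [−k, k] one has h(x₂) − h(x₁) ≥ (x₁ − x₂)·k/√(1 + 2k²). In particular, for distinct integers x₁ ≠ x₂ in [−k,k], |h(x₁) − h(x₂)| ≥ k/√(1 + 2k²), and |h(x)| ≤ √(1 + 2k²) for all x ∈ [−k,k]. -/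
/-!
Write `g(t) = √(1 + t²/2)`, so that `h(x) = g(k - x) - g(k + x)`. For `x ∈ [-k, k]` both
arguments lie in `[0, 2k]`, where `g ≤ g(2k) = √(1 + 2k²) =: S`. Rationalising,
`g(t) - g(s) = (t² - s²) / (2 (g(t) + g(s))) ≥ (t² - s²) / (4S)`, and for `x₂ < x₁` the two
differences of squares making up `h(x₂) - h(x₁)` add up to `4k (x₁ - x₂)`, which gives
`h(x₂) - h(x₁) ≥ (x₁ - x₂) k / S`. Everything else follows from this bound and `0 ≤ g ≤ S`.
-/

open Set

noncomputable def l1l2OddPart (k x : ℝ) : ℝ :=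
  √(1 + (k - x) ^ 2 / 2) - √(1 + (k + x) ^ 2 / 2)

theorem sub_div_le_sqrt_sub_sqrt {a b M : ℝ} (hb : 0 ≤ b) (hba : b ≤ a) (haM : √a ≤ M) :
    (a - b) / (2 * M) ≤ √a - √b := by
  have hsqrt : √b ≤ √a := Real.sqrt_le_sqrt hba
  have hbM : √b ≤ M := hsqrt.trans haM
  apply div_le_of_le_mul₀ (by linarith [Real.sqrt_nonneg a]) (by linarith)
  calc a - b = (√a - √b) * (√a + √b) := by
        linear_combination -Real.sq_sqrt (hb.trans hba) + Real.sq_sqrt hb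
    _ ≤ (√a - √b) * (2 * M) := by gcongr; linarith

theorem sqrt_one_add_sq_div_two_le {k t : ℝ} (ht₀ : 0 ≤ t) (ht : t ≤ 2 * k) :
    √(1 + t ^ 2 / 2) ≤ √(1 + 2 * k ^ 2) :=
  Real.sqrt_le_sqrt (by nlinarith)

theorem sub_mul_div_le_l1l2OddPart_sub {k x₁ x₂ : ℝ} (h₁ : x₁ ∈ Icc (-k) k)
    (h₂ : x₂ ∈ Icc (-k) k) (hle : x₂ ≤ x₁) :
    (x₁ - x₂) * k / √(1 + 2 * k ^ 2) ≤ l1l2OddPart k x₂ - l1l2OddPart k x₁ := by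
  obtain ⟨hl₁, hu₁⟩ := h₁
  obtain ⟨hl₂, hu₂⟩ := h₂
  have hminus := sub_div_le_sqrt_sub_sqrt (a := 1 + (k - x₂) ^ 2 / 2) (b := 1 + (k - x₁) ^ 2 / 2)
    (by positivity) (by nlinarith) (sqrt_one_add_sq_div_two_le (k := k) (by linarith) (by linarith))
  have hplus := sub_div_le_sqrt_sub_sqrt (a := 1 + (k + x₁) ^ 2 / 2) (b := 1 + (k + x₂) ^ 2 / 2)
    (by positivity) (by nlinarith) (sqrt_one_add_sq_div_two_le (k := k) (by linarith) (by linarith))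
  calc (x₁ - x₂) * k / √(1 + 2 * k ^ 2)
      = (1 + (k - x₂) ^ 2 / 2 - (1 + (k - x₁) ^ 2 / 2)) / (2 * √(1 + 2 * k ^ 2))
        + (1 + (k + x₁) ^ 2 / 2 - (1 + (k + x₂) ^ 2 / 2)) / (2 * √(1 + 2 * k ^ 2)) := by
        ring
    _ ≤ l1l2OddPart k x₂ - l1l2OddPart k x₁ := by
        unfold l1l2OddPart
        linarith

theorem l1l2OddPart_strictAntiOn {k : ℝ} (hk : 0 < k) :
    StrictAntiOn (l1l2OddPart k) (Icc (-k) k) := by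
  intro x₂ h₂ x₁ h₁ hlt
  have hgap : 0 < (x₁ - x₂) * k / √(1 + 2 * k ^ 2) :=
    div_pos (mul_pos (sub_pos.mpr hlt) hk) (Real.sqrt_pos.mpr (by positivity))
  linarith [sub_mul_div_le_l1l2OddPart_sub h₁ h₂ hlt.le]

theorem div_sqrt_le_abs_l1l2OddPart_sub {k : ℝ} (hk : 0 < k) {x₁ x₂ : ℤ}
    (h₁ : (x₁ : ℝ) ∈ Icc (-k) k) (h₂ : (x₂ : ℝ) ∈ Icc (-k) k) (hne : x₁ ≠ x₂) :
    k / √(1 + 2 * k ^ 2) ≤ |l1l2OddPart k x₁ - l1l2OddPart k x₂| := by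
  wlog hlt : x₂ < x₁ generalizing x₁ x₂
  · rw [abs_sub_comm]
    exact this h₂ h₁ hne.symm (hne.lt_or_gt.resolve_right hlt)
  have hone : (1 : ℝ) ≤ x₁ - x₂ := by
    rw [le_sub_iff_add_le']
    exact_mod_cast Int.add_one_le_iff.mpr hlt
  calc k / √(1 + 2 * k ^ 2) ≤ (x₁ - x₂ : ℝ) * k / √(1 + 2 * k ^ 2) := by
        gcongr; exact le_mul_of_one_le_left hk.le hone
    _ ≤ l1l2OddPart k x₂ - l1l2OddPart k x₁ :=
        sub_mul_div_le_l1l2OddPart_sub h₁ h₂ (by exact_mod_cast hlt.le)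
    _ ≤ |l1l2OddPart k x₁ - l1l2OddPart k x₂| := by
        rw [abs_sub_comm]; exact le_abs_self _

theorem abs_l1l2OddPart_le {k x : ℝ} (hx : x ∈ Icc (-k) k) :
    |l1l2OddPart k x| ≤ √(1 + 2 * k ^ 2) := by
  obtain ⟨hl, hu⟩ := hx
  exact abs_sub_le_of_nonneg_of_le (Real.sqrt_nonneg _)
    (sqrt_one_add_sq_div_two_le (by linarith) (by linarith)) (Real.sqrt_nonneg _)
    (sqrt_one_add_sq_div_two_le (by linarith) (by linarith))

/-- Separation bounds for the odd part `h(x) = √(1+(k−x)²/2) − √(1+(k+x)²/2)` arising in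
the ℓ₁-ℓ₂ loss Mastermind algorithm: `h` is strictly decreasing on `[−k,k]`, decreases
at rate at least `k/√(1+2k²)`, is separated by at least `k/√(1+2k²)` on distinct
integers of `[−k,k]`, and satisfies `|h| ≤ √(1+2k²)` on `[−k,k]`. -/
theorem l1l2_odd_part_separation (k : ℝ) (hk : 0 < k) :
    StrictAntiOn
      (fun x : ℝ => Real.sqrt (1 + (k - x) ^ 2 / 2) - Real.sqrt (1 + (k + x) ^ 2 / 2))
      (Set.Icc (-k) k) ∧
    (∀ x₁ x₂ : ℝ, x₁ ∈ Set.Icc (-k) k → x₂ ∈ Set.Icc (-k) k → x₂ < x₁ →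
      (x₁ - x₂) * k / Real.sqrt (1 + 2 * k ^ 2) ≤
        ((Real.sqrt (1 + (k - x₂) ^ 2 / 2) - Real.sqrt (1 + (k + x₂) ^ 2 / 2)) -
          (Real.sqrt (1 + (k - x₁) ^ 2 / 2) - Real.sqrt (1 + (k + x₁) ^ 2 / 2)))) ∧
    (∀ x₁ x₂ : ℤ, (x₁ : ℝ) ∈ Set.Icc (-k) k → (x₂ : ℝ) ∈ Set.Icc (-k) k → x₁ ≠ x₂ →
      k / Real.sqrt (1 + 2 * k ^ 2) ≤
        |(Real.sqrt (1 + (k - (x₁ : ℝ)) ^ 2 / 2) - Real.sqrt (1 + (k + (x₁ : ℝ)) ^ 2 / 2)) -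
          (Real.sqrt (1 + (k - (x₂ : ℝ)) ^ 2 / 2) -
            Real.sqrt (1 + (k + (x₂ : ℝ)) ^ 2 / 2))|) ∧
    (∀ x : ℝ, x ∈ Set.Icc (-k) k →
      |Real.sqrt (1 + (k - x) ^ 2 / 2) - Real.sqrt (1 + (k + x) ^ 2 / 2)| ≤
        Real.sqrt (1 + 2 * k ^ 2)) :=
  ⟨l1l2OddPart_strictAntiOn hk,
    fun _ _ h₁ h₂ hlt => sub_mul_div_le_l1l2OddPart_sub h₁ h₂ hlt.le,
    fun _ _ h₁ h₂ hne => div_sqrt_le_abs_l1l2OddPart_sub hk h₁ h₂ hne,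
    fun _ hx => abs_l1l2OddPart_le hx⟩
end

section
/- Let c > 0 and k > 0 be real numbers and define h(x) = −c·x + (c²/2)·log((c + k + x)/(c + k − x)) for x ∈ [−k, k]. Then h is strictly decreasing on [−k, k], and for all real x₂ < x₁ in [−k, k] one has h(x₂) − h(x₁) ≥ (x₁ − x₂)·c·k/(c + 2k). In particular, for distinct integers x₁ ≠ x₂ in [−k, k], |h(x₁) − h(x₂)| ≥ c·k/(c + 2k). -/
/-!
Since `(c+k)² − x² ≥ (c+k)² − k² = c(c+2k)` on `[−k,k]`, the derivative
`h′(x) = −c + c²(c+k)/((c+k)² − x²)` is at most `−c + c(c+k)/(c+2k) = −ck/(c+2k)` there, and the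
mean value theorem turns this into the rate bound. Distinct integers are at distance at least one.
-/

open Set Real

noncomputable def fairOddPart (c k x : ℝ) : ℝ :=
  -c * x + c ^ 2 / 2 * log ((c + k + x) / (c + k - x))

lemma hasDerivAt_log_div_add_sub {a x : ℝ} (hx : x ∈ Ioo (-a) a) :
    HasDerivAt (fun y => log ((a + y) / (a - y))) (2 * a / (a ^ 2 - x ^ 2)) x := by
  obtain ⟨hxa, hxa'⟩ := hx
  have hp : a + x ≠ 0 := by linarith
  have hm : a - x ≠ 0 := by linarith
  have hq : HasDerivAt (fun y => (a + y) / (a - y))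
      ((1 * (a - x) - (a + x) * -1) / (a - x) ^ 2) x :=
    ((hasDerivAt_id x).const_add a).div ((hasDerivAt_id x).const_sub a) hm
  have hsq : a ^ 2 - x ^ 2 ≠ 0 := by
    rw [sq_sub_sq]; exact mul_ne_zero hp hm
  convert hq.log (div_ne_zero hp hm) using 1
  field_simp
  ring

lemma hasDerivAt_fairOddPart {c k x : ℝ} (hx : x ∈ Ioo (-(c + k)) (c + k)) :
    HasDerivAt (fairOddPart c k) (-c + c ^ 2 * (c + k) / ((c + k) ^ 2 - x ^ 2)) x :=
  (((hasDerivAt_id x).const_mul (-c)).add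
    ((hasDerivAt_log_div_add_sub hx).const_mul (c ^ 2 / 2))).congr_deriv (by ring)

lemma fairOddPart_deriv_le {c k x : ℝ} (hc : 0 < c) (hx : x ∈ Icc (-k) k) :
    -c + c ^ 2 * (c + k) / ((c + k) ^ 2 - x ^ 2) ≤ -(c * k / (c + 2 * k)) := by
  obtain ⟨hkx, hxk⟩ := hx
  have hk : 0 ≤ k := by linarith
  have hsq : c * (c + 2 * k) ≤ (c + k) ^ 2 - x ^ 2 := by nlinarith
  calc -c + c ^ 2 * (c + k) / ((c + k) ^ 2 - x ^ 2)
      ≤ -c + c ^ 2 * (c + k) / (c * (c + 2 * k)) := by gcongr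
    _ = -(c * k / (c + 2 * k)) := by field_simp; ring

lemma fairOddPart_rate {c k : ℝ} (hc : 0 < c) {x₁ x₂ : ℝ} (h₁ : x₁ ∈ Icc (-k) k)
    (h₂ : x₂ ∈ Icc (-k) k) (hlt : x₂ ≤ x₁) :
    (x₁ - x₂) * (c * k / (c + 2 * k)) ≤ fairOddPart c k x₂ - fairOddPart c k x₁ := by
  have hderiv : ∀ x ∈ Icc (-k) k, HasDerivAt (fairOddPart c k) _ x :=
    fun x hx => hasDerivAt_fairOddPart (Icc_subset_Ioo (by linarith) (by linarith) hx)
  have hmvt := (convex_Icc (-k) k).image_sub_le_mul_sub_of_deriv_le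
    (fun x hx => (hderiv x hx).continuousAt.continuousWithinAt)
    (fun x hx => (hderiv x (interior_subset hx)).differentiableAt.differentiableWithinAt)
    (fun x hx => (hderiv x (interior_subset hx)).deriv ▸ fairOddPart_deriv_le hc
      (interior_subset hx)) x₂ h₂ x₁ h₁ hlt
  linarith

lemma le_abs_sub_of_int_of_rate {f : ℝ → ℝ} {s : Set ℝ} {r : ℝ} (hr : 0 ≤ r)
    (hf : ∀ x ∈ s, ∀ y ∈ s, y < x → (x - y) * r ≤ f y - f x) {m n : ℤ} (hm : (m : ℝ) ∈ s)
    (hn : (n : ℝ) ∈ s) (hmn : m ≠ n) : r ≤ |f m - f n| := by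
  wlog hlt : n < m generalizing m n
  · rw [abs_sub_comm]
    exact this hn hm hmn.symm (lt_of_le_of_ne (not_lt.mp hlt) hmn)
  have hone : (1 : ℝ) ≤ m - n := by
    have : (n : ℝ) + 1 ≤ m := by exact_mod_cast hlt
    linarith
  calc r ≤ (m - n) * r := le_mul_of_one_le_left hr hone
    _ ≤ f n - f m := hf m hm n hn (by exact_mod_cast hlt)
    _ ≤ |f m - f n| := by rw [abs_sub_comm]; exact le_abs_self _

/-- Separation bounds for the odd part `h(x) = −c·x + (c²/2)·log((c+k+x)/(c+k−x))`
arising in the Fair estimator loss Mastermind algorithm: `h` is strictly decreasing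
on `[−k,k]`, decreases at rate at least `c·k/(c+2k)`, and is separated by at least
`c·k/(c+2k)` on distinct integers of `[−k,k]`. -/
theorem fair_odd_part_separation (c k : ℝ) (hc : 0 < c) (hk : 0 < k) :
    StrictAntiOn
      (fun x : ℝ => -c * x + c ^ 2 / 2 * Real.log ((c + k + x) / (c + k - x)))
      (Set.Icc (-k) k) ∧
    (∀ x₁ x₂ : ℝ, x₁ ∈ Set.Icc (-k) k → x₂ ∈ Set.Icc (-k) k → x₂ < x₁ →
      (x₁ - x₂) * c * k / (c + 2 * k) ≤
        ((-c * x₂ + c ^ 2 / 2 * Real.log ((c + k + x₂) / (c + k - x₂))) -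
          (-c * x₁ + c ^ 2 / 2 * Real.log ((c + k + x₁) / (c + k - x₁))))) ∧
    (∀ x₁ x₂ : ℤ, (x₁ : ℝ) ∈ Set.Icc (-k) k → (x₂ : ℝ) ∈ Set.Icc (-k) k → x₁ ≠ x₂ →
      c * k / (c + 2 * k) ≤
        |(-c * (x₁ : ℝ) + c ^ 2 / 2 * Real.log ((c + k + (x₁ : ℝ)) / (c + k - (x₁ : ℝ)))) -
          (-c * (x₂ : ℝ) + c ^ 2 / 2 *
            Real.log ((c + k + (x₂ : ℝ)) / (c + k - (x₂ : ℝ))))|) := by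
  have hr : 0 < c * k / (c + 2 * k) := by positivity
  have rate : ∀ x₁ ∈ Icc (-k) k, ∀ x₂ ∈ Icc (-k) k, x₂ < x₁ →
      (x₁ - x₂) * (c * k / (c + 2 * k)) ≤ fairOddPart c k x₂ - fairOddPart c k x₁ :=
    fun x₁ h₁ x₂ h₂ hlt => fairOddPart_rate hc h₁ h₂ hlt.le
  refine ⟨fun a ha b hb hab => ?_, fun x₁ x₂ h₁ h₂ hlt => ?_,
    fun m n hm hn hmn => le_abs_sub_of_int_of_rate hr.le rate hm hn hmn⟩
  · show fairOddPart c k b < fairOddPart c k a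
    linarith [rate b hb a ha hab, mul_pos (sub_pos.mpr hab) hr]
  · exact le_of_eq_of_le (by ring) (rate x₁ h₁ x₂ h₂ hlt)
end
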